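/- arXiv:2310.02673 — 12 statements merged into one kernel-verified Lean document; each statement's English description precedes it below -/
import Mathlib

section
/- Let x ∈ ℂ and write u := Re x. Set D(x) := (σ₁₂² − σ₁₁σ₂₂)x² + 2(μ₂σ₁₂ − μ₁σ₂₂)x + μ₂² ∈ ℂ and s := √((Re D(x) + |D(x)|)/2) ≥ 0. Then for every y ∈ ℂ with γ(x,y) = 0 one has Re y = (−σ₁₂u − μ₂ + s)/σ₂₂ or Re y = (−σ₁₂u − μ₂ − s)/σ₂₂; moreover, each of these two values is the real part of some root y ∈ ℂ of γ(x,·) = 0. -/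
open Real Complex

/-!
Viewed as a quadratic in `y`, `γ(x, y) = (σ₂₂/2) y² + (σ₁₂x + μ₂) y + (σ₁₁x²/2 + μ₁x)` has
discriminant `D(x)`, so its roots are `(-(σ₁₂x + μ₂) ± √D(x)) / σ₂₂` for the principal square root
`√D(x) = D(x) ^ (1/2)`, whose real part is exactly `s = √((Re D + |D|)/2)`.
-/

theorem Complex.quadratic_eq_zero_iff_cpow_inv_two {a b c : ℂ} (ha : a ≠ 0) (y : ℂ) :
    a * (y * y) + b * y + c = 0 ↔
      y = (-b + discrim a b c ^ (2⁻¹ : ℂ)) / (2 * a) ∨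
        y = (-b - discrim a b c ^ (2⁻¹ : ℂ)) / (2 * a) :=
  quadratic_eq_zero_iff ha (by rw [← sq, cpow_ofNat_inv_pow]) y

theorem Complex.re_div_two_mul_ofReal (z : ℂ) (a : ℝ) : (z / (2 * (a : ℂ))).re = z.re / (2 * a) := by
  rw [← div_ofReal_re]
  push_cast
  rfl

theorem stmt2_general
    (σ11 σ12 σ22 μ1 μ2 : ℝ)
    (hσ22 : 0 < σ22)
    (γ : ℂ → ℂ → ℂ)
    (hγ : ∀ x y : ℂ, γ x y =
      (1 / 2) * ((σ11 : ℂ) * x ^ 2 + 2 * (σ12 : ℂ) * x * y + (σ22 : ℂ) * y ^ 2)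
        + (μ1 : ℂ) * x + (μ2 : ℂ) * y)
    (x : ℂ) (u : ℝ) (hu : u = x.re)
    (D : ℂ)
    (hD : D = ((σ12 : ℂ) ^ 2 - (σ11 : ℂ) * (σ22 : ℂ)) * x ^ 2
      + 2 * ((μ2 : ℂ) * (σ12 : ℂ) - (μ1 : ℂ) * (σ22 : ℂ)) * x + (μ2 : ℂ) ^ 2)
    (s : ℝ) (hs : s = Real.sqrt ((D.re + ‖D‖) / 2)) :
    (∀ y : ℂ, γ x y = 0 →
      y.re = (-σ12 * u - μ2 + s) / σ22 ∨ y.re = (-σ12 * u - μ2 - s) / σ22) ∧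
    (∃ y : ℂ, γ x y = 0 ∧ y.re = (-σ12 * u - μ2 + s) / σ22) ∧
    (∃ y : ℂ, γ x y = 0 ∧ y.re = (-σ12 * u - μ2 - s) / σ22) := by
  set a : ℂ := ((σ22 / 2 : ℝ) : ℂ)
  set b : ℂ := σ12 * x + μ2
  set c : ℂ := σ11 / 2 * x ^ 2 + μ1 * x
  have ha : a ≠ 0 := ofReal_ne_zero.2 (by positivity)
  have hquad (y : ℂ) : γ x y = a * (y * y) + b * y + c := by
    rw [hγ]; push_cast [a, b, c]; ring
  have hdiscrim : discrim a b c = D := by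
    rw [discrim, hD]; push_cast [a, b, c]; ring
  have hroots (y : ℂ) : γ x y = 0 ↔ y = (-b + D ^ (2⁻¹ : ℂ)) / (2 * a) ∨
      y = (-b + -D ^ (2⁻¹ : ℂ)) / (2 * a) := by
    rw [hquad, quadratic_eq_zero_iff_cpow_inv_two ha, hdiscrim, ← sub_eq_add_neg]
  have hre (ε : ℂ) : ((-b + ε) / (2 * a)).re = (-σ12 * u - μ2 + ε.re) / σ22 := by
    rw [re_div_two_mul_ofReal]
    simp only [b, hu, neg_add_rev, add_re, neg_re, ofReal_re, mul_re, ofReal_im, zero_mul, sub_zero]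
    ring
  have hsqrt_re : (D ^ (2⁻¹ : ℂ)).re = s := by rw [cpow_inv_two_re, hs, add_comm]
  refine ⟨fun y hy => ?_, ⟨_, (hroots _).2 (Or.inl rfl), ?_⟩, ⟨_, (hroots _).2 (Or.inr rfl), ?_⟩⟩
  · rcases (hroots y).1 hy with rfl | rfl
    · exact .inl (by rw [hre, hsqrt_re])
    · exact .inr (by rw [hre, neg_re, hsqrt_re]; ring)
  · rw [hre, hsqrt_re]
  · rw [hre, neg_re, hsqrt_re]; ring

theorem stmt2
    (σ11 σ12 σ22 μ1 μ2 : ℝ)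
    (hσ11 : 0 < σ11) (hσ22 : 0 < σ22)
    (hdet : 0 < σ11 * σ22 - σ12 ^ 2)
    (hμ1 : 0 < μ1) (hμ2 : 0 < μ2)
    (γ : ℂ → ℂ → ℂ)
    (hγ : ∀ x y : ℂ, γ x y =
      (1 / 2) * ((σ11 : ℂ) * x ^ 2 + 2 * (σ12 : ℂ) * x * y + (σ22 : ℂ) * y ^ 2)
        + (μ1 : ℂ) * x + (μ2 : ℂ) * y)
    (x : ℂ) (u : ℝ) (hu : u = x.re)
    (D : ℂ)
    (hD : D = ((σ12 : ℂ) ^ 2 - (σ11 : ℂ) * (σ22 : ℂ)) * x ^ 2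
      + 2 * ((μ2 : ℂ) * (σ12 : ℂ) - (μ1 : ℂ) * (σ22 : ℂ)) * x + (μ2 : ℂ) ^ 2)
    (s : ℝ) (hs : s = Real.sqrt ((D.re + ‖D‖) / 2)) :
    (∀ y : ℂ, γ x y = 0 →
      y.re = (-σ12 * u - μ2 + s) / σ22 ∨ y.re = (-σ12 * u - μ2 - s) / σ22) ∧
    (∃ y : ℂ, γ x y = 0 ∧ y.re = (-σ12 * u - μ2 + s) / σ22) ∧
    (∃ y : ℂ, γ x y = 0 ∧ y.re = (-σ12 * u - μ2 - s) / σ22) :=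
  stmt2_general σ11 σ12 σ22 μ1 μ2 hσ22 γ hγ x u hu D hD s hs
end

section
/- For every x ∈ ℂ with σ₁₂·Re x + μ₂ > 0 there exists y ∈ ℂ with γ(x,y) = 0 and Re y < 0; in fact, setting u := Re x, D(x) := (σ₁₂² − σ₁₁σ₂₂)x² + 2(μ₂σ₁₂ − μ₁σ₂₂)x + μ₂² and s := √((Re D(x) + |D(x)|)/2), some root y of γ(x,·) = 0 satisfies Re y = (−σ₁₂u − μ₂ − s)/σ₂₂ < 0. (This covers the strip u ∈ (−ε, x_max + δ) of Lemma 3.1(iii), where δ = ∞ if σ₁₂ ≥ 0 and δ = −μ₂/σ₁₂ − x_max if σ₁₂ < 0.) -/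
open Real Complex

/-! As a polynomial in `y`, `γ(x, y)` is the quadratic `(σ₂₂/2) y² + (σ₁₂ x + μ₂) y + c(x)`,
whose discriminant is `D(x)`, so its roots are `(-(σ₁₂ x + μ₂) ± w) / σ₂₂` for a square root `w` of `D(x)`.
The principal square root has real part `s = √((Re D + |D|)/2) ≥ 0`, and taking the root with
`-w` gives `Re y = (-(σ₁₂ Re x + μ₂) - s)/σ₂₂`, which is negative as soon as `σ₁₂ Re x + μ₂ > 0`. -/

namespace Complex

lemma sqrt_re_add_norm_mul_sqrt_norm_sub_re (z : ℂ) :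
    √((z.re + ‖z‖) / 2) * √((‖z‖ - z.re) / 2) = |z.im| / 2 := by
  have h_norm_sq : ‖z‖ ^ 2 = z.re ^ 2 + z.im ^ 2 := by
    rw [Complex.sq_norm, normSq_apply]; ring
  rw [← Real.sqrt_mul (by linarith [neg_abs_le z.re, abs_re_le_norm z]),
    show (z.re + ‖z‖) / 2 * ((‖z‖ - z.re) / 2) = (z.im / 2) ^ 2 by linear_combination h_norm_sq / 4,
    Real.sqrt_sq_eq_abs, abs_div, abs_two]

lemma exists_mul_self_eq_and_re_eq_sqrt (z : ℂ) :
    ∃ w : ℂ, w * w = z ∧ w.re = √((z.re + ‖z‖) / 2) := by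
  set s := √((z.re + ‖z‖) / 2)
  set t := √((‖z‖ - z.re) / 2)
  have hs : s ^ 2 = (z.re + ‖z‖) / 2 :=
    Real.sq_sqrt (by linarith [neg_abs_le z.re, abs_re_le_norm z])
  have ht : t ^ 2 = (‖z‖ - z.re) / 2 :=
    Real.sq_sqrt (by linarith [le_abs_self z.re, abs_re_le_norm z])
  have hst : s * t = |z.im| / 2 := sqrt_re_add_norm_mul_sqrt_norm_sub_re z
  refine ⟨⟨s, if 0 ≤ z.im then t else -t⟩, Complex.ext ?_ ?_, rfl⟩
  · split_ifs <;> simp only [mul_re] <;> linear_combination hs - ht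
  · split_ifs with h
    · simp only [mul_im]; linear_combination 2 * hst + abs_of_nonneg h
    · simp only [mul_im]; linear_combination -2 * hst - abs_of_neg (not_le.mp h)

end Complex

lemma exists_quadratic_eq_zero_and_re_eq {a : ℝ} (ha : a ≠ 0) (b c : ℂ) :
    ∃ y : ℂ, (a : ℂ) * (y * y) + b * y + c = 0 ∧
      y.re = (-b.re - √(((discrim (a : ℂ) b c).re + ‖discrim (a : ℂ) b c‖) / 2)) / (2 * a) := by
  obtain ⟨w, hw, hw_re⟩ := exists_mul_self_eq_and_re_eq_sqrt (discrim (a : ℂ) b c)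
  refine ⟨(-b - w) / (2 * a), (quadratic_eq_zero_iff (ofReal_ne_zero.mpr ha) hw.symm _).mpr
    (Or.inr rfl), ?_⟩
  rw [← hw_re, show (2 * a : ℂ) = ((2 * a : ℝ) : ℂ) by push_cast; ring, div_ofReal_re]
  simp

theorem stmt3_general
    (σ11 σ12 σ22 μ1 μ2 : ℝ)
    (hσ22 : 0 < σ22)
    (γ : ℂ → ℂ → ℂ)
    (hγ : ∀ x y : ℂ, γ x y =
      (1 / 2) * ((σ11 : ℂ) * x ^ 2 + 2 * (σ12 : ℂ) * x * y + (σ22 : ℂ) * y ^ 2)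
        + (μ1 : ℂ) * x + (μ2 : ℂ) * y)
    (x : ℂ) (hx : σ12 * x.re + μ2 > 0)
    (u : ℝ) (hu : u = x.re)
    (D : ℂ)
    (hD : D = ((σ12 : ℂ) ^ 2 - (σ11 : ℂ) * (σ22 : ℂ)) * x ^ 2
      + 2 * ((μ2 : ℂ) * (σ12 : ℂ) - (μ1 : ℂ) * (σ22 : ℂ)) * x + (μ2 : ℂ) ^ 2)
    (s : ℝ) (hs : s = Real.sqrt ((D.re + ‖D‖) / 2)) :
    ∃ y : ℂ, γ x y = 0 ∧ y.re = (-σ12 * u - μ2 - s) / σ22 ∧ y.re < 0 := by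
  obtain ⟨y, hy, hy_re⟩ := exists_quadratic_eq_zero_and_re_eq (a := σ22 / 2) (by positivity)
    (σ12 * x + μ2) (σ11 / 2 * x ^ 2 + μ1 * x)
  have h_discrim : discrim ((σ22 / 2 : ℝ) : ℂ) (σ12 * x + μ2) (σ11 / 2 * x ^ 2 + μ1 * x) = D := by
    rw [hD, discrim]; push_cast; ring
  have hy_re' : y.re = (-σ12 * u - μ2 - s) / σ22 := by
    rw [hy_re, h_discrim, ← hs, hu]; simp only [add_re, mul_re, ofReal_re, ofReal_im, zero_mul, sub_zero]; ring
  refine ⟨y, ?_, hy_re', ?_⟩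
  · rw [hγ, ← hy]; push_cast; ring
  · rw [hy_re', hu]
    have hs_nonneg : 0 ≤ s := hs ▸ Real.sqrt_nonneg _
    apply div_neg_of_neg_of_pos _ hσ22
    linarith

theorem stmt3
    (σ11 σ12 σ22 μ1 μ2 : ℝ)
    (hσ11 : 0 < σ11) (hσ22 : 0 < σ22)
    (hdet : 0 < σ11 * σ22 - σ12 ^ 2)
    (hμ1 : 0 < μ1) (hμ2 : 0 < μ2)
    (γ : ℂ → ℂ → ℂ)
    (hγ : ∀ x y : ℂ, γ x y =
      (1 / 2) * ((σ11 : ℂ) * x ^ 2 + 2 * (σ12 : ℂ) * x * y + (σ22 : ℂ) * y ^ 2)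
        + (μ1 : ℂ) * x + (μ2 : ℂ) * y)
    (x : ℂ) (hx : σ12 * x.re + μ2 > 0)
    (u : ℝ) (hu : u = x.re)
    (D : ℂ)
    (hD : D = ((σ12 : ℂ) ^ 2 - (σ11 : ℂ) * (σ22 : ℂ)) * x ^ 2
      + 2 * ((μ2 : ℂ) * (σ12 : ℂ) - (μ1 : ℂ) * (σ22 : ℂ)) * x + (μ2 : ℂ) ^ 2)
    (s : ℝ) (hs : s = Real.sqrt ((D.re + ‖D‖) / 2)) :
    ∃ y : ℂ, γ x y = 0 ∧ y.re = (-σ12 * u - μ2 - s) / σ22 ∧ y.re < 0 :=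
  stmt3_general σ11 σ12 σ22 μ1 μ2 hσ22 γ hγ x hx u hu D hD s hs
end

section
/- The following are equivalent: (i) x_max·r₁₂ + Y⁻(x_max)·r₂₂ > 0 (equivalently ρ > −Y⁻(x_max)/x_max; note Y⁺(x_max) = Y⁻(x_max)); (ii) 0 < x* < x_max and −ρ·x* = Y⁻(x*), i.e. the nonzero intersection point of the ellipse γ = 0 with the line r₁₂x + r₂₂y = 0 lies on the lower branch over (0, x_max). -/
/-!
Put `d = det Σ`, `b = μ₂σ₁₂ − μ₁σ₂₂` and `p = σ₂₂ρ − σ₁₂`. The discriminant of `γ(x, ·)` is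
`Q x = −d x² + 2 b x + μ₂²`, and `σ₂₂ (ρx + Y⁻(x)) = (p x − μ₂) − √(Q x)`, so both conditions are
about the line `L x = p x − μ₂` and the half-ellipse `z = √(Q x)`, whose right end is `(x_max, 0)`.
Since `Q − L² = x (2u − (d + p²) x)` with `u = μ₂ p + b = σ₂₂ (μ₂ρ − μ₁)`, the line meets the
full ellipse `z² = Q x` at `x = 0` and `x = x*`. With `s = √D₁` one computes
`μ₂ d L(x_max) = (b + s)(u − s)` and `μ₂ (d + p²) L(x*) = u² − s²`, so both conditions reduce
to `s < u`; the bound `x* < x_max` comes from `Q(x*) = L(x*)² > 0`.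
-/

open Real

def ellipseDisc (d b μ x : ℝ) : ℝ := -d * x ^ 2 + 2 * b * x + μ ^ 2

section EllipseChord

variable {d b μ p s xmax xstar : ℝ}

theorem mul_ellipseDisc (hs : s ^ 2 = b ^ 2 + μ ^ 2 * d) (x : ℝ) :
    d * ellipseDisc d b μ x = s ^ 2 - (d * x - b) ^ 2 := by
  unfold ellipseDisc; linear_combination -hs

theorem abs_lt_of_sq_eq_sq_add {c : ℝ} (hc : 0 < c) (hs0 : 0 ≤ s) (hs : s ^ 2 = b ^ 2 + c) :
    |b| < s :=
  abs_lt_of_sq_lt_sq (by linarith) hs0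

theorem ellipseDisc_eq_zero_of_mul_eq (hd : 0 < d) (hs : s ^ 2 = b ^ 2 + μ ^ 2 * d)
    (hxmax : d * xmax = b + s) : ellipseDisc d b μ xmax = 0 := by
  have h := mul_ellipseDisc hs xmax
  rw [hxmax, add_sub_cancel_left, sub_self] at h
  exact (mul_eq_zero.mp h).resolve_left hd.ne'

theorem lt_of_ellipseDisc_pos (hd : 0 < d) (hs0 : 0 ≤ s) (hs : s ^ 2 = b ^ 2 + μ ^ 2 * d)
    (hxmax : d * xmax = b + s) {x : ℝ} (hx : 0 < ellipseDisc d b μ x) : x < xmax := by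
  have hsq : (d * x - b) ^ 2 < s ^ 2 := by
    have := mul_pos hd hx
    rw [mul_ellipseDisc hs] at this; linarith
  have := (abs_lt.mp (abs_lt_of_sq_lt_sq hsq hs0)).2
  exact lt_of_mul_lt_mul_left (by linarith) hd.le

theorem eq_of_ellipseDisc_eq_zero (hd : 0 < d) (hμ : 0 < μ) (hs0 : 0 ≤ s)
    (hs : s ^ 2 = b ^ 2 + μ ^ 2 * d) (hxmax : d * xmax = b + s) {x : ℝ} (hx : 0 < x)
    (h : ellipseDisc d b μ x = 0) : x = xmax := by
  have hsq : (d * x - b) ^ 2 = s ^ 2 := by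
    have := mul_ellipseDisc hs x
    rw [h, mul_zero] at this; linarith
  rcases sq_eq_sq_iff_eq_or_eq_neg.mp hsq with h | h
  · exact mul_left_cancel₀ hd.ne' (by linarith)
  · linarith [mul_pos hd hx, (abs_lt.mp (abs_lt_of_sq_eq_sq_add (by positivity) hs0 hs)).2]

theorem ellipseDisc_eq_sq_of_chord (hxstar : (d + p ^ 2) * xstar = 2 * (μ * p + b)) :
    ellipseDisc d b μ xstar = (p * xstar - μ) ^ 2 := by
  unfold ellipseDisc; linear_combination -xstar * hxstar

theorem mul_line_at_chord_eq (hs : s ^ 2 = b ^ 2 + μ ^ 2 * d)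
    (hxstar : (d + p ^ 2) * xstar = 2 * (μ * p + b)) :
    μ * (d + p ^ 2) * (p * xstar - μ) = (μ * p + b) ^ 2 - s ^ 2 := by
  linear_combination μ * p * hxstar + hs

theorem mul_line_at_right_end_eq (hs : s ^ 2 = b ^ 2 + μ ^ 2 * d) (hxmax : d * xmax = b + s) :
    μ * d * (p * xmax - μ) = (b + s) * (μ * p + b - s) := by
  linear_combination μ * p * hxmax + hs

theorem sqrt_ellipseDisc_lt_iff (hd : 0 < d) (hμ : 0 < μ) (hs0 : 0 ≤ s)
    (hs : s ^ 2 = b ^ 2 + μ ^ 2 * d) (hxmax : d * xmax = b + s)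
    (hxstar : (d + p ^ 2) * xstar = 2 * (μ * p + b)) :
    √(ellipseDisc d b μ xmax) < p * xmax - μ ↔
      0 < xstar ∧ xstar < xmax ∧ √(ellipseDisc d b μ xstar) = p * xstar - μ := by
  have hbs := abs_lt.mp (abs_lt_of_sq_eq_sq_add (by positivity) hs0 hs)
  have hdp : 0 < d + p ^ 2 := by positivity
  have hxstar_pos : 0 < xstar ↔ 0 < μ * p + b := by
    rw [← mul_pos_iff_of_pos_left hdp, hxstar]; constructor <;> intro h <;> linarith
  have hend : 0 < p * xmax - μ ↔ s < μ * p + b := by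
    rw [← mul_pos_iff_of_pos_left (mul_pos hμ hd), mul_line_at_right_end_eq hs hxmax,
      mul_pos_iff_of_pos_left (by linarith), sub_pos]
  have hchord := mul_line_at_chord_eq hs hxstar
  rw [ellipseDisc_eq_zero_of_mul_eq hd hs hxmax, sqrt_zero, ellipseDisc_eq_sq_of_chord hxstar,
    sqrt_sq_eq_abs, abs_eq_self, hend]
  constructor
  · intro hsu
    have hL : 0 < p * xstar - μ := by
      rw [← mul_pos_iff_of_pos_left (mul_pos hμ hdp), hchord]; nlinarith
    refine ⟨hxstar_pos.mpr (by linarith), lt_of_ellipseDisc_pos hd hs0 hs hxmax ?_, hL.le⟩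
    rw [ellipseDisc_eq_sq_of_chord hxstar]; positivity
  · rintro ⟨hx0, hlt, hL⟩
    have hu := hxstar_pos.mp hx0
    have hsu : s ≤ μ * p + b :=
      abs_le_of_sq_le_sq' (by nlinarith [mul_nonneg (mul_pos hμ hdp).le hL]) hu.le |>.2
    refine hsu.lt_of_ne fun heq ↦ hlt.ne ?_
    have hL0 : p * xstar - μ = 0 := by
      rw [← heq, sub_self] at hchord
      exact (mul_eq_zero.mp hchord).resolve_left (mul_pos hμ hdp).ne'
    refine eq_of_ellipseDisc_eq_zero hd hμ hs0 hs hxmax hx0 ?_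
    rw [ellipseDisc_eq_sq_of_chord hxstar, hL0, sq, zero_mul]

end EllipseChord

theorem stmt6_general
    (σ11 σ12 σ22 μ1 μ2 : ℝ)
    (hσ22 : 0 < σ22)
    (hdet : 0 < σ11 * σ22 - σ12 ^ 2)
    (hμ2 : 0 < μ2)
    (detS D1 xmax : ℝ)
    (hdetS : detS = σ11 * σ22 - σ12 ^ 2)
    (hD1 : D1 = (μ2 * σ12 - μ1 * σ22) ^ 2 + μ2 ^ 2 * detS)
    (hxmax : xmax = (μ2 * σ12 - μ1 * σ22 + Real.sqrt D1) / detS)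
    (Ym : ℝ → ℝ)
    (hYm : ∀ x, Ym x = (-σ12 * x - μ2 -
      Real.sqrt ((σ12 ^ 2 - σ11 * σ22) * x ^ 2 + 2 * (μ2 * σ12 - μ1 * σ22) * x + μ2 ^ 2)) / σ22)
    (r12 r22 : ℝ) (hr22 : 0 < r22)
    (ρ : ℝ) (hρ : ρ = r12 / r22)
    (xstar : ℝ)
    (hxstar : xstar = 2 * (μ2 * ρ - μ1) / (σ11 - 2 * σ12 * ρ + σ22 * ρ ^ 2)) :
    xmax * r12 + Ym xmax * r22 > 0 ↔
      (0 < xstar ∧ xstar < xmax ∧ -ρ * xstar = Ym xstar) := by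
  set b := μ2 * σ12 - μ1 * σ22
  set p := σ22 * ρ - σ12
  have hd : 0 < detS := hdetS ▸ hdet
  have hs : √D1 ^ 2 = b ^ 2 + μ2 ^ 2 * detS := by rw [sq_sqrt (by rw [hD1]; positivity), hD1]
  have hxmax' : detS * xmax = b + √D1 := by rw [hxmax]; field_simp
  have hxstar' : (detS + p ^ 2) * xstar = 2 * (μ2 * p + b) := by
    have hσA : detS + p ^ 2 = σ22 * (σ11 - 2 * σ12 * ρ + σ22 * ρ ^ 2) := by
      simp only [p]; rw [hdetS]; ring
    have hA : 0 < σ11 - 2 * σ12 * ρ + σ22 * ρ ^ 2 :=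
      (mul_pos_iff_of_pos_left hσ22).mp (hσA ▸ by positivity)
    rw [hσA, hxstar, mul_assoc, mul_div_cancel₀ _ hA.ne']; simp only [p, b]; ring
  have hline (x : ℝ) : σ22 * (ρ * x + Ym x) = p * x - μ2 - √(ellipseDisc detS b μ2 x) := by
    have hQ : (σ12 ^ 2 - σ11 * σ22) * x ^ 2 + 2 * b * x + μ2 ^ 2 = ellipseDisc detS b μ2 x := by
      rw [ellipseDisc, hdetS]; ring
    rw [hYm, hQ]; field_simp; simp only [p]; ring
  have hr12 : r12 = ρ * r22 := by rw [hρ]; field_simp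
  have hi : xmax * r12 + Ym xmax * r22 = r22 / σ22 * (σ22 * (ρ * xmax + Ym xmax)) := by
    rw [hr12]; field_simp
  rw [gt_iff_lt, hi, mul_pos_iff_of_pos_left (by positivity), hline, sub_pos, neg_mul,
    neg_eq_iff_add_eq_zero, ← mul_eq_zero_iff_left hσ22.ne', hline, sub_eq_zero, eq_comm]
  exact sqrt_ellipseDisc_lt_iff hd hμ2 (sqrt_nonneg _) hs hxmax' hxstar'

theorem stmt6
    (σ11 σ12 σ22 μ1 μ2 : ℝ)
    (hσ11 : 0 < σ11) (hσ22 : 0 < σ22)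
    (hdet : 0 < σ11 * σ22 - σ12 ^ 2)
    (hμ1 : 0 < μ1) (hμ2 : 0 < μ2)
    (detS D1 xmin xmax : ℝ)
    (hdetS : detS = σ11 * σ22 - σ12 ^ 2)
    (hD1 : D1 = (μ2 * σ12 - μ1 * σ22) ^ 2 + μ2 ^ 2 * detS)
    (hxmin : xmin = (μ2 * σ12 - μ1 * σ22 - Real.sqrt D1) / detS)
    (hxmax : xmax = (μ2 * σ12 - μ1 * σ22 + Real.sqrt D1) / detS)
    (Ym : ℝ → ℝ)
    (hYm : ∀ x, Ym x = (-σ12 * x - μ2 -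
      Real.sqrt ((σ12 ^ 2 - σ11 * σ22) * x ^ 2 + 2 * (μ2 * σ12 - μ1 * σ22) * x + μ2 ^ 2)) / σ22)
    (r12 r22 : ℝ) (hr22 : 0 < r22)
    (ρ : ℝ) (hρ : ρ = r12 / r22)
    (xstar : ℝ)
    (hxstar : xstar = 2 * (μ2 * ρ - μ1) / (σ11 - 2 * σ12 * ρ + σ22 * ρ ^ 2)) :
    xmax * r12 + Ym xmax * r22 > 0 ↔
      (0 < xstar ∧ xstar < xmax ∧ -ρ * xstar = Ym xstar) :=
  stmt6_general σ11 σ12 σ22 μ1 μ2 hσ22 hdet hμ2 detS D1 xmax hdetS hD1 hxmax Ym hYm r12 r22 hr22 ρ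
    hρ xstar hxstar
end

section
/- Let α ∈ (0, π/2) and define x(α) := (μ₂σ₁₂ − μ₁σ₂₂)/detΣ + ((σ₂₂ − tan(α)·σ₁₂)/detΣ)·√((μ₂²σ₁₁ − 2μ₁μ₂σ₁₂ + μ₁²σ₂₂)/(σ₁₁·tan²(α) − 2σ₁₂·tan(α) + σ₂₂)) and y(α) := (μ₁σ₁₂ − μ₂σ₁₁)/detΣ + ((σ₁₁ − σ₁₂/tan(α))/detΣ)·√((μ₁²σ₂₂ − 2μ₁μ₂σ₁₂ + μ₂²σ₁₁)/(σ₂₂/tan²(α) − 2σ₁₂/tan(α) + σ₁₁)). Then γ(x(α), y(α)) = 0, and for every (x,y) ∈ ℝ² with γ(x,y) = 0 one has x·cos(α) + y·sin(α) ≤ x(α)·cos(α) + y(α)·sin(α), with equality if and only if (x,y) = (x(α), y(α)). In other words, (x(α), y(α)) is the unique maximizer of x·cos α + y·sin α over the ellipse γ = 0, and it is given by these explicit formulas. -/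
open Real

set_option maxHeartbeats 1000000 in
theorem stmt7
    (σ11 σ12 σ22 μ1 μ2 : ℝ)
    (hσ11 : 0 < σ11) (hσ22 : 0 < σ22)
    (hdet : 0 < σ11 * σ22 - σ12 ^ 2)
    (hμ1 : 0 < μ1) (hμ2 : 0 < μ2)
    (γ : ℝ → ℝ → ℝ)
    (hγ : ∀ x y, γ x y =
      (1 / 2) * (σ11 * x ^ 2 + 2 * σ12 * x * y + σ22 * y ^ 2) + μ1 * x + μ2 * y)
    (detS : ℝ) (hdetS : detS = σ11 * σ22 - σ12 ^ 2)
    (α : ℝ) (hα : α ∈ Set.Ioo 0 (Real.pi / 2))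
    (xα yα : ℝ)
    (hxα : xα = (μ2 * σ12 - μ1 * σ22) / detS +
      ((σ22 - Real.tan α * σ12) / detS) *
        Real.sqrt ((μ2 ^ 2 * σ11 - 2 * μ1 * μ2 * σ12 + μ1 ^ 2 * σ22) /
          (σ11 * Real.tan α ^ 2 - 2 * σ12 * Real.tan α + σ22)))
    (hyα : yα = (μ1 * σ12 - μ2 * σ11) / detS +
      ((σ11 - σ12 / Real.tan α) / detS) *
        Real.sqrt ((μ1 ^ 2 * σ22 - 2 * μ1 * μ2 * σ12 + μ2 ^ 2 * σ11) /
          (σ22 / Real.tan α ^ 2 - 2 * σ12 / Real.tan α + σ11))) :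
    γ xα yα = 0 ∧
    ∀ x y : ℝ, γ x y = 0 →
      (x * Real.cos α + y * Real.sin α ≤ xα * Real.cos α + yα * Real.sin α ∧
       (x * Real.cos α + y * Real.sin α = xα * Real.cos α + yα * Real.sin α ↔
         x = xα ∧ y = yα)) := by
  obtain ⟨hα1, hα2⟩ := hα
  have hπ := Real.pi_pos
  have hc : 0 < Real.cos α := Real.cos_pos_of_mem_Ioo ⟨by linarith, hα2⟩
  have hs : 0 < Real.sin α := Real.sin_pos_of_pos_of_lt_pi hα1 (by linarith)
  have ht : Real.tan α = Real.sin α / Real.cos α := Real.tan_eq_sin_div_cos α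
  subst hdetS
  set s := Real.sin α with hs'
  set c := Real.cos α with hc'
  set d := σ11 * σ22 - σ12 ^ 2 with hdd
  set Q := μ2 ^ 2 * σ11 - 2 * μ1 * μ2 * σ12 + μ1 ^ 2 * σ22 with hQdef
  set D := σ11 * s ^ 2 - 2 * σ12 * s * c + σ22 * c ^ 2 with hDdef
  have hd0 : d ≠ 0 := ne_of_gt hdet
  have hQ : 0 < Q := by nlinarith [sq_nonneg (σ11 * μ2 - σ12 * μ1), mul_pos hμ1 hμ1]
  have hD : 0 < D := by nlinarith [sq_nonneg (σ11 * s - σ12 * c), mul_pos hc hc]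
  set S := Real.sqrt (Q / D) with hSdef
  have hQD : (0:ℝ) ≤ Q / D := le_of_lt (div_pos hQ hD)
  have hSpos : 0 < S := Real.sqrt_pos.2 (div_pos hQ hD)
  have hS2 : D * S ^ 2 = Q := by
    rw [hSdef, Real.sq_sqrt hQD]
    field_simp
  have hx' : xα * d = (μ2 * σ12 - μ1 * σ22) + (σ22 * c - σ12 * s) * S := by
    rw [hxα, ht]
    have h1 : σ11 * (s / c) ^ 2 - 2 * σ12 * (s / c) + σ22 = D / c ^ 2 := by
      field_simp [hDdef]; ring
    rw [h1]
    have h2 : Q / (D / c ^ 2) = (Q / D) * c ^ 2 := by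
      field_simp
    rw [h2, Real.sqrt_mul hQD, Real.sqrt_sq hc.le, ← hSdef]
    field_simp
  have hQy : μ1 ^ 2 * σ22 - 2 * μ1 * μ2 * σ12 + μ2 ^ 2 * σ11 = Q := by rw [hQdef]; ring
  have hy' : yα * d = (μ1 * σ12 - μ2 * σ11) + (σ11 * s - σ12 * c) * S := by
    rw [hyα, ht, hQy]
    have h1 : σ22 / (s / c) ^ 2 - 2 * σ12 / (s / c) + σ11 = D / s ^ 2 := by
      field_simp [hDdef]; ring
    rw [h1]
    have h2 : Q / (D / s ^ 2) = (Q / D) * s ^ 2 := by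
      field_simp
    rw [h2, Real.sqrt_mul hQD, Real.sqrt_sq hs.le, ← hSdef]
    field_simp
  have hγ0 : γ xα yα = 0 := by
    have key1 : (2 * d ^ 2) * γ xα yα = 0 := by
      rw [hγ]
      linear_combination
        (σ11 * (xα * d + ((μ2 * σ12 - μ1 * σ22) + (σ22 * c - σ12 * s) * S)) +
          2 * σ12 * (yα * d) + 2 * d * μ1) * hx' +
        (σ22 * (yα * d + ((μ1 * σ12 - μ2 * σ11) + (σ11 * s - σ12 * c) * S)) +
          2 * σ12 * ((μ2 * σ12 - μ1 * σ22) + (σ22 * c - σ12 * s) * S) + 2 * d * μ2) * hy' +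
        d * hS2
    have h2d : (2 * d ^ 2) ≠ 0 := by positivity
    exact (mul_eq_zero.mp key1).resolve_left h2d
  have Hkey : ∀ x y : ℝ, γ x y - γ xα yα =
      S * ((x * c + y * s) - (xα * c + yα * s)) +
        (1 / 2) * (σ11 * (x - xα) ^ 2 + 2 * σ12 * (x - xα) * (y - yα) + σ22 * (y - yα) ^ 2) := by
    intro x y
    have key2 : d ^ 2 * (γ x y - γ xα yα) =
        d ^ 2 * (S * ((x * c + y * s) - (xα * c + yα * s)) +
          (1 / 2) * (σ11 * (x - xα) ^ 2 + 2 * σ12 * (x - xα) * (y - yα) + σ22 * (y - yα) ^ 2)) := by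
      rw [hγ, hγ]
      linear_combination
        (d * (σ11 * x + σ12 * y + S * c - μ1) -
          σ11 * (xα * d + ((μ2 * σ12 - μ1 * σ22) + (σ22 * c - σ12 * s) * S)) -
          2 * σ12 * (yα * d)) * hx' +
        (d * (σ12 * x + σ22 * y + S * s - μ2) -
          2 * σ12 * ((μ2 * σ12 - μ1 * σ22) + (σ22 * c - σ12 * s) * S) -
          σ22 * (yα * d + ((μ1 * σ12 - μ2 * σ11) + (σ11 * s - σ12 * c) * S))) * hy'
    exact mul_left_cancel₀ (by positivity) key2
  refine ⟨hγ0, ?_⟩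
  have hdet' : 0 < σ11 * σ22 - σ12 ^ 2 := hdet
  clear hxα hyα hx' hy' hγ ht hS2 hQD hQ hD hQy hd0 hdet
  clear_value s c d Q D S
  clear hSdef hQdef hDdef hdd hs' hc' d Q D
  intro x y hxy
  have H := Hkey x y
  rw [hxy, hγ0] at H
  have hFnn : 0 ≤ σ11 * (x - xα) ^ 2 + 2 * σ12 * (x - xα) * (y - yα) + σ22 * (y - yα) ^ 2 := by
    nlinarith [sq_nonneg (σ11 * (x - xα) + σ12 * (y - yα)),
      mul_nonneg hdet'.le (sq_nonneg (y - yα))]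
  have hle : x * c + y * s ≤ xα * c + yα * s := by
    by_contra h
    push_neg at h
    nlinarith [mul_pos hSpos (sub_pos.2 h)]
  refine ⟨hle, ?_, ?_⟩
  · intro heq
    have h0 : (x * c + y * s) - (xα * c + yα * s) = 0 := by linarith
    rw [h0, mul_zero] at H
    have hF0 : σ11 * (x - xα) ^ 2 + 2 * σ12 * (x - xα) * (y - yα) + σ22 * (y - yα) ^ 2 = 0 := by
      linarith
    have hy2 : (y - yα) ^ 2 = 0 := by
      nlinarith [sq_nonneg (σ11 * (x - xα) + σ12 * (y - yα)), sq_nonneg (y - yα),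
        mul_nonneg hdet'.le (sq_nonneg (y - yα))]
    have hyy : y = yα := by
      have := pow_eq_zero_iff (n := 2) (by norm_num) |>.mp hy2
      linarith
    have hxx : x = xα := by
      rw [hyy] at hF0
      have hx2 : (x - xα) ^ 2 = 0 := by
        nlinarith [sq_nonneg (x - xα)]
      have := pow_eq_zero_iff (n := 2) (by norm_num) |>.mp hx2
      linarith
    exact ⟨hxx, hyy⟩
  · rintro ⟨rfl, rfl⟩
    rfl
end

section
/- The real zero set of the kernel is exactly the image of the parametrization: {(x,y) ∈ ℝ² : γ(x,y) = 0} = {(x̃(t), ỹ(t)) : t ∈ [0, 2π)}. Moreover the map t ↦ (x̃(t), ỹ(t)) is injective on [0, 2π). -/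
/-!
Completing the square, with `Δ = σ₁₁σ₂₂ - σ₁₂²`, `u = Δx - (μ₂σ₁₂ - μ₁σ₂₂)` and
`w = σ₂₂(Δy - (μ₁σ₁₂ - μ₂σ₁₁)) + σ₁₂u`, gives `2Δ²σ₂₂ γ(x, y) = Δu² + w² - ΔD₁`. Hence the
affine change of coordinates `(x, y) ↦ (u / √D₁, w / √(D₁Δ))` maps the zero set of `γ`
bijectively onto the unit circle. In these coordinates the parametrization is simply
`t ↦ (cos t, sin t)`: for the second coordinate this is the addition formula
`√(σ₁₁σ₂₂) cos (t - β) = -σ₁₂ cos t + √Δ sin t` together with `√D₂ σ₂₂ = √D₁ √(σ₁₁σ₂₂)`.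
Both claims thus reduce to `t ↦ (cos t, sin t)` being a bijection from `[0, 2π)` onto the circle.
-/

open Real Set Function

theorem injOn_cos_sin_Ico : InjOn (fun t => (cos t, sin t)) (Ico 0 (2 * π)) := by
  intro s hs t ht hst
  have : Fact (0 < 2 * π) := ⟨two_pi_pos⟩
  rw [Prod.mk.injEq] at hst
  exact (AddCircle.coe_eq_coe_iff_of_mem_Ico (a := 0) (by simpa using hs) (by simpa using ht)).1
    (Real.Angle.cos_sin_inj hst.1 hst.2)

theorem exists_mem_Ico_cos_sin_eq {c s : ℝ} (h : c ^ 2 + s ^ 2 = 1) :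
    ∃ t ∈ Ico 0 (2 * π), cos t = c ∧ sin t = s := by
  set z : ℂ := ⟨c, s⟩
  have hz : ‖z‖ = 1 := by
    rw [Complex.norm_def, Complex.normSq_mk, ← sq, ← sq, h, sqrt_one]
  have hz0 : z ≠ 0 := norm_ne_zero_iff.1 (by simp [hz])
  refine ⟨toIcoMod two_pi_pos 0 z.arg, by simpa using toIcoMod_mem_Ico two_pi_pos 0 z.arg, ?_⟩
  rw [toIcoMod, zsmul_eq_mul, cos_sub_int_mul_two_pi, sin_sub_int_mul_two_pi,
    Complex.cos_arg hz0, Complex.sin_arg, hz, div_one, div_one]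
  exact ⟨rfl, rfl⟩

theorem eq_image_Ico_and_injOn_of_comp_eq_cos_sin {α : Type*} {Z : Set α} {g : ℝ → α}
    {Φ : α → ℝ × ℝ} (hΦ : Injective Φ) (hZ : ∀ p, p ∈ Z ↔ (Φ p).1 ^ 2 + (Φ p).2 ^ 2 = 1)
    (hg : ∀ t, Φ (g t) = (cos t, sin t)) :
    Z = g '' Ico 0 (2 * π) ∧ InjOn g (Ico 0 (2 * π)) := by
  refine ⟨Set.ext fun p => ⟨fun hp => ?_, ?_⟩, fun s hs t ht hst => ?_⟩
  · obtain ⟨t, ht, hc, hs⟩ := exists_mem_Ico_cos_sin_eq ((hZ p).1 hp)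
    exact ⟨t, ht, hΦ (by rw [hg, hc, hs])⟩
  · rintro ⟨t, -, rfl⟩
    rw [hZ, hg]
    exact cos_sq_add_sin_sq t
  · exact injOn_cos_sin_Ico hs ht (by simpa only [hg] using congrArg Φ hst)

theorem mul_cos_sub_arccos_div {c s : ℝ} (hs : 0 < s) (hcs : c ^ 2 ≤ s ^ 2) (t : ℝ) :
    s * cos (t - arccos (c / s)) = c * cos t + √(s ^ 2 - c ^ 2) * sin t := by
  obtain ⟨hlo, hhi⟩ := abs_le_of_sq_le_sq' hcs hs.le
  have hsin : √(1 - (c / s) ^ 2) = √(s ^ 2 - c ^ 2) / s := by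
    rw [div_pow, one_sub_div (by positivity), sqrt_div' _ (by positivity), sqrt_sq hs.le]
  rw [cos_sub, cos_arccos (by rwa [le_div_iff₀ hs, neg_one_mul]) (by rwa [div_le_one hs]),
    sin_arccos, hsin]
  field_simp

namespace QuadraticKernel

variable (σ11 σ12 σ22 μ1 μ2 : ℝ)

noncomputable def kernel (x y : ℝ) : ℝ :=
  (1 / 2) * (σ11 * x ^ 2 + 2 * σ12 * x * y + σ22 * y ^ 2) + μ1 * x + μ2 * y

noncomputable def ellipseCoords (p : ℝ × ℝ) : ℝ × ℝ :=
  let Δ := σ11 * σ22 - σ12 ^ 2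
  let u := Δ * p.1 - (μ2 * σ12 - μ1 * σ22)
  let A := √((μ2 * σ12 - μ1 * σ22) ^ 2 + μ2 ^ 2 * Δ)
  (u / A, (σ22 * (Δ * p.2 - (μ1 * σ12 - μ2 * σ11)) + σ12 * u) / (A * √Δ))

variable {σ11 σ12 σ22 μ1 μ2}

theorem ellipseCoords_injective (hσ22 : σ22 ≠ 0) (hdet : 0 < σ11 * σ22 - σ12 ^ 2)
    (hμ2 : μ2 ≠ 0) : Injective (ellipseCoords σ11 σ12 σ22 μ1 μ2) := by
  intro p q hpq
  have hA : 0 < √((μ2 * σ12 - μ1 * σ22) ^ 2 + μ2 ^ 2 * (σ11 * σ22 - σ12 ^ 2)) := by positivity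
  simp only [ellipseCoords, Prod.mk.injEq] at hpq
  obtain ⟨hx, hy⟩ := hpq
  rw [div_left_inj' hA.ne', sub_left_inj, mul_right_inj' hdet.ne'] at hx
  rw [div_left_inj' (by positivity), hx, add_left_inj, mul_right_inj' hσ22, sub_left_inj,
    mul_right_inj' hdet.ne'] at hy
  exact Prod.ext hx hy

theorem kernel_eq_zero_iff (hσ22 : σ22 ≠ 0) (hdet : 0 < σ11 * σ22 - σ12 ^ 2)
    (hμ2 : μ2 ≠ 0) (p : ℝ × ℝ) :
    kernel σ11 σ12 σ22 μ1 μ2 p.1 p.2 = 0 ↔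
      (ellipseCoords σ11 σ12 σ22 μ1 μ2 p).1 ^ 2 + (ellipseCoords σ11 σ12 σ22 μ1 μ2 p).2 ^ 2
        = 1 := by
  set Δ := σ11 * σ22 - σ12 ^ 2
  set D := (μ2 * σ12 - μ1 * σ22) ^ 2 + μ2 ^ 2 * Δ
  have hD : 0 < D := by positivity
  set u := Δ * p.1 - (μ2 * σ12 - μ1 * σ22)
  set w := σ22 * (Δ * p.2 - (μ1 * σ12 - μ2 * σ11)) + σ12 * u
  have key : 2 * Δ ^ 2 * σ22 * kernel σ11 σ12 σ22 μ1 μ2 p.1 p.2 = Δ * u ^ 2 + w ^ 2 - Δ * D := by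
    simp only [kernel, Δ, u, w, D]; ring
  simp only [ellipseCoords]
  rw [div_pow, div_pow, mul_pow, sq_sqrt hD.le, sq_sqrt hdet.le,
    div_add_div _ _ hD.ne' (by positivity), div_eq_one_iff_eq (by positivity),
    ← mul_right_inj' (show 2 * Δ ^ 2 * σ22 ≠ 0 by positivity), key, mul_zero, sub_eq_zero,
    ← mul_right_inj' hD.ne']
  exact ⟨fun h => by linear_combination h, fun h => by linear_combination h⟩

theorem ellipseCoords_eq_cos_sin (hσ22 : 0 < σ22) (hdet : 0 < σ11 * σ22 - σ12 ^ 2)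
    (hμ2 : μ2 ≠ 0) {x y t : ℝ}
    (hx : (σ11 * σ22 - σ12 ^ 2) * x = μ2 * σ12 - μ1 * σ22
      + √((μ2 * σ12 - μ1 * σ22) ^ 2 + μ2 ^ 2 * (σ11 * σ22 - σ12 ^ 2)) * cos t)
    (hy : (σ11 * σ22 - σ12 ^ 2) * y = μ1 * σ12 - μ2 * σ11
      + √((μ1 * σ12 - μ2 * σ11) ^ 2 + μ1 ^ 2 * (σ11 * σ22 - σ12 ^ 2))
        * cos (t - arccos (-σ12 / √(σ11 * σ22)))) :
    ellipseCoords σ11 σ12 σ22 μ1 μ2 (x, y) = (cos t, sin t) := by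
  have hprod : 0 < σ11 * σ22 := by nlinarith [sq_nonneg σ12]
  simp only [ellipseCoords]
  set Δ := σ11 * σ22 - σ12 ^ 2
  set D1 := (μ2 * σ12 - μ1 * σ22) ^ 2 + μ2 ^ 2 * Δ
  set D2 := (μ1 * σ12 - μ2 * σ11) ^ 2 + μ1 ^ 2 * Δ
  have hA : 0 < √D1 := by positivity
  have hs : 0 < √(σ11 * σ22) := sqrt_pos.2 hprod
  have hB : √D2 * σ22 = √D1 * √(σ11 * σ22) :=
    calc √D2 * σ22 = √(D2 * σ22 ^ 2) := by rw [sqrt_mul (by positivity), sqrt_sq hσ22.le]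
      _ = √(D1 * (σ11 * σ22)) := by congr 1; ring
      _ = √D1 * √(σ11 * σ22) := sqrt_mul (by positivity) _
  have hcos := mul_cos_sub_arccos_div hs (c := -σ12) (by rw [sq_sqrt hprod.le]; linarith) t
  rw [sq_sqrt hprod.le, neg_sq] at hcos
  have hu : Δ * x - (μ2 * σ12 - μ1 * σ22) = √D1 * cos t := by rw [hx]; ring
  have hw : σ22 * (Δ * y - (μ1 * σ12 - μ2 * σ11)) + σ12 * (√D1 * cos t) = √D1 * √Δ * sin t := by
    rw [hy, add_sub_cancel_left, ← mul_assoc, mul_comm σ22, hB, mul_assoc, hcos]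
    ring
  rw [hu, hw, mul_div_cancel_left₀ _ hA.ne', mul_div_cancel_left₀ _ (by positivity)]

end QuadraticKernel

open QuadraticKernel in
theorem stmt8_general
    (σ11 σ12 σ22 μ1 μ2 : ℝ)
    (hσ22 : 0 < σ22)
    (hdet : 0 < σ11 * σ22 - σ12 ^ 2)
    (hμ2 : 0 < μ2)
    (γ : ℝ → ℝ → ℝ)
    (hγ : ∀ x y, γ x y =
      (1 / 2) * (σ11 * x ^ 2 + 2 * σ12 * x * y + σ22 * y ^ 2) + μ1 * x + μ2 * y)
    (detS D1 D2 xmin xmax ymin ymax β : ℝ)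
    (hdetS : detS = σ11 * σ22 - σ12 ^ 2)
    (hD1 : D1 = (μ2 * σ12 - μ1 * σ22) ^ 2 + μ2 ^ 2 * detS)
    (hxmin : xmin = (μ2 * σ12 - μ1 * σ22 - Real.sqrt D1) / detS)
    (hxmax : xmax = (μ2 * σ12 - μ1 * σ22 + Real.sqrt D1) / detS)
    (hD2 : D2 = (μ1 * σ12 - μ2 * σ11) ^ 2 + μ1 ^ 2 * detS)
    (hymin : ymin = (μ1 * σ12 - μ2 * σ11 - Real.sqrt D2) / detS)
    (hymax : ymax = (μ1 * σ12 - μ2 * σ11 + Real.sqrt D2) / detS)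
    (hβ : β = Real.arccos (-σ12 / Real.sqrt (σ11 * σ22)))
    (xt yt : ℝ → ℝ)
    (hxt : ∀ t, xt t = (xmax + xmin) / 2 + ((xmax - xmin) / 2) * Real.cos t)
    (hyt : ∀ t, yt t = (ymax + ymin) / 2 + ((ymax - ymin) / 2) * Real.cos (t - β)) :
    {p : ℝ × ℝ | γ p.1 p.2 = 0} = (fun t => (xt t, yt t)) '' Set.Ico 0 (2 * Real.pi) ∧
    Set.InjOn (fun t => (xt t, yt t)) (Set.Ico 0 (2 * Real.pi)) := by
  subst hdetS hD1 hD2 hxmin hxmax hymin hymax hβ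
  refine eq_image_Ico_and_injOn_of_comp_eq_cos_sin (Φ := ellipseCoords σ11 σ12 σ22 μ1 μ2)
    (ellipseCoords_injective hσ22.ne' hdet hμ2.ne') (fun p => ?_)
    (fun t => ellipseCoords_eq_cos_sin hσ22 hdet hμ2.ne' ?_ ?_)
  · rw [Set.mem_ofPred_eq, hγ]
    exact kernel_eq_zero_iff hσ22.ne' hdet hμ2.ne' p
  · rw [hxt]; field_simp; ring
  · rw [hyt]; field_simp; ring

theorem stmt8
    (σ11 σ12 σ22 μ1 μ2 : ℝ)
    (hσ11 : 0 < σ11) (hσ22 : 0 < σ22)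
    (hdet : 0 < σ11 * σ22 - σ12 ^ 2)
    (hμ1 : 0 < μ1) (hμ2 : 0 < μ2)
    (γ : ℝ → ℝ → ℝ)
    (hγ : ∀ x y, γ x y =
      (1 / 2) * (σ11 * x ^ 2 + 2 * σ12 * x * y + σ22 * y ^ 2) + μ1 * x + μ2 * y)
    (detS D1 D2 xmin xmax ymin ymax β : ℝ)
    (hdetS : detS = σ11 * σ22 - σ12 ^ 2)
    (hD1 : D1 = (μ2 * σ12 - μ1 * σ22) ^ 2 + μ2 ^ 2 * detS)
    (hxmin : xmin = (μ2 * σ12 - μ1 * σ22 - Real.sqrt D1) / detS)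
    (hxmax : xmax = (μ2 * σ12 - μ1 * σ22 + Real.sqrt D1) / detS)
    (hD2 : D2 = (μ1 * σ12 - μ2 * σ11) ^ 2 + μ1 ^ 2 * detS)
    (hymin : ymin = (μ1 * σ12 - μ2 * σ11 - Real.sqrt D2) / detS)
    (hymax : ymax = (μ1 * σ12 - μ2 * σ11 + Real.sqrt D2) / detS)
    (hβ : β = Real.arccos (-σ12 / Real.sqrt (σ11 * σ22)))
    (xt yt : ℝ → ℝ)
    (hxt : ∀ t, xt t = (xmax + xmin) / 2 + ((xmax - xmin) / 2) * Real.cos t)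
    (hyt : ∀ t, yt t = (ymax + ymin) / 2 + ((ymax - ymin) / 2) * Real.cos (t - β)) :
    {p : ℝ × ℝ | γ p.1 p.2 = 0} = (fun t => (xt t, yt t)) '' Set.Ico 0 (2 * Real.pi) ∧
    Set.InjOn (fun t => (xt t, yt t)) (Set.Ico 0 (2 * Real.pi)) :=
  stmt8_general σ11 σ12 σ22 μ1 μ2 hσ22 hdet hμ2 γ hγ detS D1 D2 xmin xmax ymin ymax β hdetS hD1
    hxmin hxmax hD2 hymin hymax hβ xt yt hxt hyt
end

section
/- One has √σ₁₁·(x_max − x_min)·sin β = √σ₂₂·(y_max − y_min)·sin β = 2·√((σ₂₂μ₁² − 2σ₁₂μ₁μ₂ + σ₁₁μ₂²)/detΣ). (The right-hand side equals 2√(μᵀΣ⁻¹μ) for μ = (μ₁, μ₂), i.e. twice the norm of the transformed drift.) -/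
/-!
The two roots of each quadratic differ by `2 √D / det Σ`, and each discriminant factors as
`D₁ = σ₂₂ Q`, `D₂ = σ₁₁ Q` with `Q = σ₂₂μ₁² − 2σ₁₂μ₁μ₂ + σ₁₁μ₂²`. Since `cos β = −σ₁₂/√(σ₁₁σ₂₂)`,
`sin β = √det Σ / (√σ₁₁ √σ₂₂)`, so the diagonal factors cancel and both products equal
`2 √Q / √det Σ`.
-/

open Real

lemma sin_arccos_neg_div_sqrt_mul {a c : ℝ} (ha : 0 < a) (hc : 0 < c) (b : ℝ) :
    sin (arccos (-b / √(a * c))) = √(a * c - b ^ 2) / (√a * √c) := by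
  have hac : 0 < a * c := mul_pos ha hc
  have h : 1 - (-b / √(a * c)) ^ 2 = (a * c - b ^ 2) / (a * c) := by
    rw [div_pow, neg_sq, sq_sqrt hac.le]
    field_simp
  rw [sin_arccos, h, sqrt_div' _ hac.le, sqrt_mul ha.le]

lemma discriminant_eq_mul_adjugate_form (a b c u v : ℝ) :
    (u * b - v * c) ^ 2 + u ^ 2 * (a * c - b ^ 2) =
      c * (c * v ^ 2 - 2 * b * v * u + a * u ^ 2) := by
  ring

lemma adjugate_form_nonneg {a b c : ℝ} (hc : 0 < c) (hdet : 0 ≤ a * c - b ^ 2) (u v : ℝ) :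
    0 ≤ c * v ^ 2 - 2 * b * v * u + a * u ^ 2 := by
  refine nonneg_of_mul_nonneg_right ?_ hc
  rw [← discriminant_eq_mul_adjugate_form]
  positivity

lemma sqrt_mul_root_gap_mul_sin_arccos {a b c D : ℝ} (ha : 0 < a) (hc : 0 < c)
    (hdet : 0 < a * c - b ^ 2) {u v : ℝ} (hD : D = (u * b - v * c) ^ 2 + u ^ 2 * (a * c - b ^ 2)) :
    √a * ((u * b - v * c + √D) / (a * c - b ^ 2) - (u * b - v * c - √D) / (a * c - b ^ 2)) *
        sin (arccos (-b / √(a * c))) =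
      2 * √((c * v ^ 2 - 2 * b * v * u + a * u ^ 2) / (a * c - b ^ 2)) := by
  have hsqrtD : √D = √c * √(c * v ^ 2 - 2 * b * v * u + a * u ^ 2) := by
    rw [← sqrt_mul hc.le, hD, discriminant_eq_mul_adjugate_form]
  have hsdet : 0 < √(a * c - b ^ 2) := sqrt_pos.2 hdet
  have hsq : √(a * c - b ^ 2) ^ 2 = a * c - b ^ 2 := sq_sqrt hdet.le
  rw [sin_arccos_neg_div_sqrt_mul ha hc, hsqrtD, sqrt_div (adjugate_form_nonneg hc hdet.le u v),
    div_sub_div_same]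
  generalize √(a * c - b ^ 2) = s at hsq hsdet ⊢
  rw [← hsq]
  field_simp
  ring

theorem stmt9_general
    (σ11 σ12 σ22 μ1 μ2 : ℝ)
    (hσ11 : 0 < σ11) (hσ22 : 0 < σ22)
    (hdet : 0 < σ11 * σ22 - σ12 ^ 2)
    (detS D1 D2 xmin xmax ymin ymax β : ℝ)
    (hdetS : detS = σ11 * σ22 - σ12 ^ 2)
    (hD1 : D1 = (μ2 * σ12 - μ1 * σ22) ^ 2 + μ2 ^ 2 * detS)
    (hxmin : xmin = (μ2 * σ12 - μ1 * σ22 - Real.sqrt D1) / detS)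
    (hxmax : xmax = (μ2 * σ12 - μ1 * σ22 + Real.sqrt D1) / detS)
    (hD2 : D2 = (μ1 * σ12 - μ2 * σ11) ^ 2 + μ1 ^ 2 * detS)
    (hymin : ymin = (μ1 * σ12 - μ2 * σ11 - Real.sqrt D2) / detS)
    (hymax : ymax = (μ1 * σ12 - μ2 * σ11 + Real.sqrt D2) / detS)
    (hβ : β = Real.arccos (-σ12 / Real.sqrt (σ11 * σ22))) :
    Real.sqrt σ11 * (xmax - xmin) * Real.sin β =
      2 * Real.sqrt ((σ22 * μ1 ^ 2 - 2 * σ12 * μ1 * μ2 + σ11 * μ2 ^ 2) / detS) ∧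
    Real.sqrt σ22 * (ymax - ymin) * Real.sin β =
      2 * Real.sqrt ((σ22 * μ1 ^ 2 - 2 * σ12 * μ1 * μ2 + σ11 * μ2 ^ 2) / detS) := by
  subst hdetS hxmin hxmax hymin hymax hβ
  constructor
  · exact sqrt_mul_root_gap_mul_sin_arccos hσ11 hσ22 hdet hD1
  · have hdet' : 0 < σ22 * σ11 - σ12 ^ 2 := by linarith
    have key := sqrt_mul_root_gap_mul_sin_arccos hσ22 hσ11 hdet' (u := μ1) (v := μ2)
      (hD2.trans (by ring))
    rw [mul_comm σ22 σ11] at key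
    convert key using 4
    ring

theorem stmt9
    (σ11 σ12 σ22 μ1 μ2 : ℝ)
    (hσ11 : 0 < σ11) (hσ22 : 0 < σ22)
    (hdet : 0 < σ11 * σ22 - σ12 ^ 2)
    (hμ1 : 0 < μ1) (hμ2 : 0 < μ2)
    (detS D1 D2 xmin xmax ymin ymax β : ℝ)
    (hdetS : detS = σ11 * σ22 - σ12 ^ 2)
    (hD1 : D1 = (μ2 * σ12 - μ1 * σ22) ^ 2 + μ2 ^ 2 * detS)
    (hxmin : xmin = (μ2 * σ12 - μ1 * σ22 - Real.sqrt D1) / detS)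
    (hxmax : xmax = (μ2 * σ12 - μ1 * σ22 + Real.sqrt D1) / detS)
    (hD2 : D2 = (μ1 * σ12 - μ2 * σ11) ^ 2 + μ1 ^ 2 * detS)
    (hymin : ymin = (μ1 * σ12 - μ2 * σ11 - Real.sqrt D2) / detS)
    (hymax : ymax = (μ1 * σ12 - μ2 * σ11 + Real.sqrt D2) / detS)
    (hβ : β = Real.arccos (-σ12 / Real.sqrt (σ11 * σ22))) :
    Real.sqrt σ11 * (xmax - xmin) * Real.sin β =
      2 * Real.sqrt ((σ22 * μ1 ^ 2 - 2 * σ12 * μ1 * μ2 + σ11 * μ2 ^ 2) / detS) ∧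
    Real.sqrt σ22 * (ymax - ymin) * Real.sin β =
      2 * Real.sqrt ((σ22 * μ1 ^ 2 - 2 * σ12 * μ1 * μ2 + σ11 * μ2 ^ 2) / detS) :=
  stmt9_general σ11 σ12 σ22 μ1 μ2 hσ11 hσ22 hdet detS D1 D2 xmin xmax ymin ymax β hdetS hD1 hxmin
    hxmax hD2 hymin hymax hβ
end

section
/- Let θ := arccos(−(x_max+x_min)/(x_max−x_min)) ∈ (0,π) (well defined since x_min < 0 < x_max). Then: (a) 0 < θ < β; (b) x̃(θ) = 0 and ỹ(θ) = 0, i.e. the parametrization of the ellipse passes through the origin at parameter θ; (c) sin(θ)·(μ₁√σ₂₂ + μ₂√σ₁₁·cos β) = cos(θ)·μ₂√σ₁₁·sin β, i.e. tan θ = sin β / ((μ₁/μ₂)·√(σ₂₂/σ₁₁) + cos β). -/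
/-!
Write `A = μ₂σ₁₂ - μ₁σ₂₂`, `B = μ₁σ₁₂ - μ₂σ₁₁`, `Δ = det Σ` and `s = √(σ₁₁σ₂₂)`. Since `x_min, x_max`
are `(A ∓ √D₁)/Δ`, the angle `θ` is `arccos (-A/√D₁)`, and `D₁ = A² + (μ₂√Δ)²` gives
`sin θ = μ₂√Δ/√D₁`; likewise `cos β = -σ₁₂/s` and `sin β = √Δ/s`. The addition formulas then give
`sin (β - θ) = μ₁σ₂₂√Δ/(√D₁ s) > 0`, which yields `θ < β` and, after clearing `√σ₁₁`, part (c);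
and `cos (θ - β) = -B/√D₂` because `D₁ σ₁₁σ₂₂ = σ₂₂² D₂`, which is exactly what `ỹ(θ) = 0` needs.
-/

open Real

lemma arccos_div_sqrt_spec {a b D : ℝ} (hb : 0 < b) (hD : D = a ^ 2 + b ^ 2) :
    0 < arccos (a / √D) ∧ cos (arccos (a / √D)) = a / √D ∧ sin (arccos (a / √D)) = b / √D := by
  have hr : 0 < √D := sqrt_pos.2 (hD ▸ by positivity)
  have hr_sq : √D ^ 2 = a ^ 2 + b ^ 2 := by rw [sq_sqrt (hD ▸ by positivity), hD]
  obtain ⟨hlo, hhi⟩ := abs_lt_of_sq_lt_sq' (a := a) (by nlinarith) hr.le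
  refine ⟨arccos_pos.2 ((div_lt_one hr).2 hhi),
    cos_arccos ((le_div_iff₀ hr).2 (by linarith)) ((div_le_one hr).2 hhi.le), ?_⟩
  rw [sin_arccos, show 1 - (a / √D) ^ 2 = (b / √D) ^ 2 by field_simp; linarith]
  exact sqrt_sq (by positivity)

lemma lt_of_sin_sub_pos {θ β : ℝ} (hθ : θ ≤ π) (hβ : 0 ≤ β) (h : 0 < sin (β - θ)) : θ < β := by
  by_contra! hle
  exact h.not_ge (sin_nonpos_of_nonpos_of_neg_pi_le (by linarith) (by linarith))

lemma sin_mul_add_eq_cos_mul_iff (θ β p q : ℝ) :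
    sin θ * (p + q * cos β) = cos θ * (q * sin β) ↔ p * sin θ = q * sin (β - θ) := by
  rw [sin_sub]
  constructor <;> intro h <;> linarith

lemma sqrt_mul_sqrt_eq_mul_sqrt_of_mul_eq {a b c e : ℝ} (ha : 0 ≤ a) (hc : 0 ≤ c)
    (h : a * b = c ^ 2 * e) : √a * √b = c * √e := by
  rw [← sqrt_mul ha, h, sqrt_mul (sq_nonneg c), sqrt_sq hc]

lemma neg_add_div_sub_of_center_radius (P r δ : ℝ) (hδ : δ ≠ 0) :
    -((P + r) / δ + (P - r) / δ) / ((P + r) / δ - (P - r) / δ) = -P / r := by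
  rw [← add_div, ← sub_div, ← neg_div, div_div_div_cancel_right₀ hδ,
    show -(P + r + (P - r)) = 2 * -P by ring, show P + r - (P - r) = 2 * r by ring,
    mul_div_mul_left _ _ two_ne_zero]

lemma center_add_radius_mul_neg_div (P r δ : ℝ) (hr : r ≠ 0) :
    ((P + r) / δ + (P - r) / δ) / 2 + ((P + r) / δ - (P - r) / δ) / 2 * (-P / r) = 0 := by
  field_simp
  ring

theorem stmt10
    (σ11 σ12 σ22 μ1 μ2 : ℝ)
    (hσ11 : 0 < σ11) (hσ22 : 0 < σ22)
    (hdet : 0 < σ11 * σ22 - σ12 ^ 2)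
    (hμ1 : 0 < μ1) (hμ2 : 0 < μ2)
    (detS D1 D2 xmin xmax ymin ymax β : ℝ)
    (hdetS : detS = σ11 * σ22 - σ12 ^ 2)
    (hD1 : D1 = (μ2 * σ12 - μ1 * σ22) ^ 2 + μ2 ^ 2 * detS)
    (hxmin : xmin = (μ2 * σ12 - μ1 * σ22 - Real.sqrt D1) / detS)
    (hxmax : xmax = (μ2 * σ12 - μ1 * σ22 + Real.sqrt D1) / detS)
    (hD2 : D2 = (μ1 * σ12 - μ2 * σ11) ^ 2 + μ1 ^ 2 * detS)
    (hymin : ymin = (μ1 * σ12 - μ2 * σ11 - Real.sqrt D2) / detS)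
    (hymax : ymax = (μ1 * σ12 - μ2 * σ11 + Real.sqrt D2) / detS)
    (hβ : β = Real.arccos (-σ12 / Real.sqrt (σ11 * σ22)))
    (xt yt : ℝ → ℝ)
    (hxt : ∀ t, xt t = (xmax + xmin) / 2 + ((xmax - xmin) / 2) * Real.cos t)
    (hyt : ∀ t, yt t = (ymax + ymin) / 2 + ((ymax - ymin) / 2) * Real.cos (t - β))
    (θ : ℝ) (hθ : θ = Real.arccos (-(xmax + xmin) / (xmax - xmin))) :
    (0 < θ ∧ θ < β) ∧
    (xt θ = 0 ∧ yt θ = 0) ∧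
    Real.sin θ * (μ1 * Real.sqrt σ22 + μ2 * Real.sqrt σ11 * Real.cos β) =
      Real.cos θ * (μ2 * Real.sqrt σ11 * Real.sin β) := by
  have hΔ : 0 < detS := hdetS ▸ hdet
  set A := μ2 * σ12 - μ1 * σ22
  set B := μ1 * σ12 - μ2 * σ11
  set d := √detS
  set s := √(σ11 * σ22)
  have hd : d ^ 2 = detS := sq_sqrt hΔ.le
  have hD1' : D1 = (-A) ^ 2 + (μ2 * d) ^ 2 := by rw [hD1, ← hd]; ring
  have hD1_pos : 0 < D1 := hD1' ▸ by positivity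
  have hr1 : 0 < √D1 := sqrt_pos.2 hD1_pos
  have hs : 0 < s := sqrt_pos.2 (mul_pos hσ11 hσ22)
  rw [hxmax, hxmin, neg_add_div_sub_of_center_radius _ _ _ hΔ.ne'] at hθ
  obtain ⟨hθ_pos, hcosθ, hsinθ⟩ : 0 < θ ∧ cos θ = -A / √D1 ∧ sin θ = μ2 * d / √D1 :=
    hθ ▸ arccos_div_sqrt_spec (by positivity) hD1'
  obtain ⟨-, hcosβ, hsinβ⟩ : 0 < β ∧ cos β = -σ12 / s ∧ sin β = d / s :=
    hβ ▸ arccos_div_sqrt_spec (by positivity) (by rw [hd, hdetS]; ring)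
  have hsin_sub : sin (β - θ) = μ1 * σ22 * d / (√D1 * s) := by
    rw [sin_sub, hsinβ, hcosθ, hcosβ, hsinθ]
    field_simp
    ring
  have hr1_mul_s : √D1 * s = σ22 * √D2 :=
    sqrt_mul_sqrt_eq_mul_sqrt_of_mul_eq hD1_pos.le hσ22.le (by rw [hD1, hD2, hdetS]; ring)
  have hcos_sub : cos (θ - β) = -B / √D2 := by
    rw [cos_sub, hcosθ, hcosβ, hsinθ, hsinβ, ← mul_div_mul_left (-B) _ hσ22.ne', ← hr1_mul_s]
    field_simp
    rw [hd, hdetS]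
    ring
  refine ⟨⟨hθ_pos,
    lt_of_sin_sub_pos (hθ ▸ arccos_le_pi _) (hβ ▸ arccos_nonneg _) (hsin_sub ▸ by positivity)⟩,
    ⟨?_, ?_⟩, (sin_mul_add_eq_cos_mul_iff _ _ _ _).2 ?_⟩
  · rw [hxt, hxmax, hxmin, hcosθ, center_add_radius_mul_neg_div _ _ _ hr1.ne']
  · rw [hyt, hymax, hymin, hcos_sub, center_add_radius_mul_neg_div _ _ _
      (right_ne_zero_of_mul (hr1_mul_s ▸ (mul_pos hr1 hs).ne'))]
  · rw [hsinθ, hsin_sub, show s = √σ11 * √σ22 from sqrt_mul hσ11.le _]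
    field_simp
    rw [sq_sqrt hσ22.le, mul_comm]
end

section
/- Let α ∈ (0, π/2) and let ω ∈ (0, β) satisfy cos(α)·√σ₂₂·sin(ω) = sin(α)·√σ₁₁·sin(β − ω) (such an ω exists and is unique). Then (x̃(ω), ỹ(ω)) is the maximizer in direction α: for every (x,y) ∈ ℝ² with γ(x,y) = 0 one has x·cos(α) + y·sin(α) ≤ x̃(ω)·cos(α) + ỹ(ω)·sin(α), with equality if and only if (x,y) = (x̃(ω), ỹ(ω)). -/
open Real

set_option maxHeartbeats 1600000 in
theorem stmt11
    (σ11 σ12 σ22 μ1 μ2 : ℝ)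
    (hσ11 : 0 < σ11) (hσ22 : 0 < σ22)
    (hdet : 0 < σ11 * σ22 - σ12 ^ 2)
    (hμ1 : 0 < μ1) (hμ2 : 0 < μ2)
    (γ : ℝ → ℝ → ℝ)
    (hγ : ∀ x y, γ x y =
      (1 / 2) * (σ11 * x ^ 2 + 2 * σ12 * x * y + σ22 * y ^ 2) + μ1 * x + μ2 * y)
    (detS D1 D2 xmin xmax ymin ymax β : ℝ)
    (hdetS : detS = σ11 * σ22 - σ12 ^ 2)
    (hD1 : D1 = (μ2 * σ12 - μ1 * σ22) ^ 2 + μ2 ^ 2 * detS)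
    (hxmin : xmin = (μ2 * σ12 - μ1 * σ22 - Real.sqrt D1) / detS)
    (hxmax : xmax = (μ2 * σ12 - μ1 * σ22 + Real.sqrt D1) / detS)
    (hD2 : D2 = (μ1 * σ12 - μ2 * σ11) ^ 2 + μ1 ^ 2 * detS)
    (hymin : ymin = (μ1 * σ12 - μ2 * σ11 - Real.sqrt D2) / detS)
    (hymax : ymax = (μ1 * σ12 - μ2 * σ11 + Real.sqrt D2) / detS)
    (hβ : β = Real.arccos (-σ12 / Real.sqrt (σ11 * σ22)))
    (xt yt : ℝ → ℝ)
    (hxt : ∀ t, xt t = (xmax + xmin) / 2 + ((xmax - xmin) / 2) * Real.cos t)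
    (hyt : ∀ t, yt t = (ymax + ymin) / 2 + ((ymax - ymin) / 2) * Real.cos (t - β))
    (α : ℝ) (hα : α ∈ Set.Ioo 0 (Real.pi / 2))
    (ω : ℝ) (hω : ω ∈ Set.Ioo 0 β)
    (hωα : Real.cos α * Real.sqrt σ22 * Real.sin ω =
      Real.sin α * Real.sqrt σ11 * Real.sin (β - ω)) :
    ∀ x y : ℝ, γ x y = 0 →
      (x * Real.cos α + y * Real.sin α ≤ xt ω * Real.cos α + yt ω * Real.sin α ∧
       (x * Real.cos α + y * Real.sin α = xt ω * Real.cos α + yt ω * Real.sin α ↔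
         x = xt ω ∧ y = yt ω)) := by
  obtain ⟨hα1, hα2⟩ := hα
  obtain ⟨hω1, hω2⟩ := hω
  have hπ := Real.pi_pos
  set p := Real.sqrt σ11 with hpdef
  set q := Real.sqrt σ22 with hqdef
  have hp0 : 0 < p := Real.sqrt_pos.mpr hσ11
  have hq0 : 0 < q := Real.sqrt_pos.mpr hσ22
  have hp : σ11 = p ^ 2 := (Real.sq_sqrt hσ11.le).symm
  have hq : σ22 = q ^ 2 := (Real.sq_sqrt hσ22.le).symm
  have hpqmul : Real.sqrt (σ11 * σ22) = p * q := Real.sqrt_mul hσ11.le σ22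
  have hpq0 : 0 < p * q := mul_pos hp0 hq0
  have hlt1 : -σ12 / (p * q) < 1 := by
    rw [div_lt_one hpq0]; nlinarith only [hdet, hp, hq, hpq0]
  have hgt1 : -1 < -σ12 / (p * q) := by
    rw [lt_div_iff₀ hpq0]; nlinarith only [hdet, hp, hq, hpq0]
  have hβ' : β = Real.arccos (-σ12 / (p * q)) := by rw [hβ, hpqmul]
  have hβ0 : 0 < β := by rw [hβ']; exact Real.arccos_pos.mpr hlt1
  have hβπ : β < Real.pi := by
    rw [hβ']
    refine lt_of_le_of_ne (Real.arccos_le_pi _) fun h => ?_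
    have := Real.arccos_eq_pi.mp h
    linarith
  set c := Real.cos β with hcdef
  set s := Real.sin β with hsdef
  have hcval : c = -σ12 / (p * q) := by
    rw [hcdef, hβ']; exact Real.cos_arccos hgt1.le hlt1.le
  have hc : σ12 = -(c * p * q) := by
    rw [hcval]; field_simp
  have hs0 : 0 < s := Real.sin_pos_of_pos_of_lt_pi hβ0 hβπ
  have hpyb : s ^ 2 = 1 - c ^ 2 := by
    have := Real.sin_sq_add_cos_sq β; rw [← hcdef, ← hsdef] at this; linarith
  have hpyo : Real.sin ω ^ 2 = 1 - Real.cos ω ^ 2 := by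
    have := Real.sin_sq_add_cos_sq ω; linarith
  have hM0 : 0 < μ1 ^ 2 * σ22 - 2 * μ1 * μ2 * σ12 + μ2 ^ 2 * σ11 := by
    nlinarith only [sq_nonneg (μ1 * σ22 - μ2 * σ12), mul_pos (pow_pos hμ2 2) hdet, hσ22]
  set m := Real.sqrt (μ1 ^ 2 * σ22 - 2 * μ1 * μ2 * σ12 + μ2 ^ 2 * σ11) with hmdef
  have hm0 : 0 < m := Real.sqrt_pos.mpr hM0
  have hm : m ^ 2 = μ1 ^ 2 * σ22 - 2 * μ1 * μ2 * σ12 + μ2 ^ 2 * σ11 := Real.sq_sqrt hM0.le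
  have hsD1 : Real.sqrt D1 = q * m := by
    have h1 : D1 = σ22 * (μ1 ^ 2 * σ22 - 2 * μ1 * μ2 * σ12 + μ2 ^ 2 * σ11) := by
      rw [hD1, hdetS]; ring
    rw [h1, Real.sqrt_mul hσ22.le]
  have hsD2 : Real.sqrt D2 = p * m := by
    have h1 : D2 = σ11 * (μ1 ^ 2 * σ22 - 2 * μ1 * μ2 * σ12 + μ2 ^ 2 * σ11) := by
      rw [hD2, hdetS]; ring
    rw [h1, Real.sqrt_mul hσ11.le]
  have hd0 : 0 < detS := hdetS ▸ hdet
  have hdne : detS ≠ 0 := ne_of_gt hd0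
  set X := xt ω with hXd
  set Y := yt ω with hYd
  have hX : detS * X = μ2 * σ12 - μ1 * σ22 + q * m * Real.cos ω := by
    rw [hXd, hxt, hxmin, hxmax, hsD1]; field_simp; ring
  have hY : detS * Y = μ1 * σ12 - μ2 * σ11 + p * m * (Real.cos ω * c + Real.sin ω * s) := by
    rw [hYd, hyt, hymin, hymax, hsD2, Real.cos_sub, ← hcdef, ← hsdef]; field_simp; ring
  have hg1 : (σ11 * X + σ12 * Y + μ1) * detS
      = m * s * σ11 * q * (s * Real.cos ω - c * Real.sin ω) := by
    linear_combination σ11 * hX + σ12 * hY + μ1 * hdetS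
      + (p*s*m*Real.sin ω + p*c*m*Real.cos ω) * hc
      + (q*m*Real.cos ω - q*s^2*m*Real.cos ω + q*c*s*m*Real.sin ω) * hp
      + (- p^2*q*m*Real.cos ω) * hpyb
  have hg2 : (σ12 * X + σ22 * Y + μ2) * detS = m * s * σ22 * p * Real.sin ω := by
    linear_combination σ12 * hX + σ22 * hY + μ2 * hdetS
      + (q*m*Real.cos ω) * hc + (p*c*m*Real.cos ω) * hq
  have hwa : Real.cos α * q * Real.sin ω
      = Real.sin α * p * (s * Real.cos ω - c * Real.sin ω) := by
    rw [Real.sin_sub, ← hcdef, ← hsdef] at hωα; linear_combination hωα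
  have hdp : detS * p ≠ 0 := by positivity
  have hpar : (σ11 * X + σ12 * Y + μ1) * Real.sin α
      = (σ12 * X + σ22 * Y + μ2) * Real.cos α := by
    apply mul_right_cancel₀ hdp
    linear_combination (- σ12*p*Real.cos α + σ11*p*Real.sin α) * hX
      + (- σ22*p*Real.cos α + σ12*p*Real.sin α) * hY
      + (- μ2*p*Real.cos α + μ1*p*Real.sin α) * hdetS
      + (- p*q*m*Real.cos ω*Real.cos α + p^2*s*m*Real.sin ω*Real.sin α
         + p^2*c*m*Real.cos ω*Real.sin α) * hc
      + (p*q*m*Real.cos ω*Real.sin α) * hp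
      + (- p^2*s*m*Real.sin ω*Real.cos α - p^2*c*m*Real.cos ω*Real.cos α) * hq
      + (- p^2*q*s*m) * hwa
      + (- p^3*q*m*Real.cos ω*Real.sin α) * hpyb
  have hA' : (1/2) * (σ11 * X ^ 2 + 2 * σ12 * X * Y + σ22 * Y ^ 2) + μ1 * X + μ2 * Y = 0 := by
    have h2 : (2:ℝ) * detS ^ 2 ≠ 0 := by positivity
    have key : ((1/2) * (σ11 * X ^ 2 + 2 * σ12 * X * Y + σ22 * Y ^ 2) + μ1 * X + μ2 * Y)
        * (2 * detS ^ 2) = 0 := by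
      linear_combination (2*μ1*detS + 2*σ12*detS*Y + σ11*q*m*Real.cos ω + σ11*detS*X - σ11*σ22*μ1 + σ11*σ12*μ2) * hX
        + (2*μ2*detS + σ22*p*s*m*Real.sin ω + σ22*p*c*m*Real.cos ω + σ22*detS*Y + 2*σ12*q*m*Real.cos ω - σ12*σ22*μ1 + 2*σ12^2*μ2 - σ11*σ22*μ2) * hY
        + (2*μ2*p*s*m*Real.sin ω + 2*μ2*p*c*m*Real.cos ω + 2*μ1*q*m*Real.cos ω - 2*σ22*μ1^2 + 4*σ12*μ1*μ2 - 2*σ11*μ2^2) * hdetS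
        + (σ22*p^2*s^2*Real.sin ω^2 + 2*σ22*p^2*c*s*Real.cos ω*Real.sin ω + σ22*p^2*c^2*Real.cos ω^2 + 2*σ12*p*q*s*Real.cos ω*Real.sin ω + 2*σ12*p*q*c*Real.cos ω^2 + σ11*q^2*Real.cos ω^2) * hm
        + (4*μ1*μ2*p^2*q^2*c*s*Real.cos ω*Real.sin ω - 2*μ1*μ2*p^2*q^2*c^2 + 4*μ1*μ2*p^2*q^2*c^2*Real.cos ω^2 - 2*σ22*μ1*μ2*p^2*s^2*Real.sin ω^2 - 4*σ22*μ1*μ2*p^2*c*s*Real.cos ω*Real.sin ω - 2*σ22*μ1*μ2*p^2*c^2*Real.cos ω^2 + 2*σ22*μ1^2*p*q*s*Real.cos ω*Real.sin ω - σ22*μ1^2*p*q*c + 2*σ22*μ1^2*p*q*c*Real.cos ω^2 - 4*σ12*μ1*μ2*p*q*s*Real.cos ω*Real.sin ω + 2*σ12*μ1*μ2*p*q*c - 4*σ12*μ1*μ2*p*q*c*Real.cos ω^2 + σ12*σ22*μ1^2 - 2*σ12^2*μ1*μ2 + 2*σ11*μ2^2*p*q*s*Real.cos ω*Real.sin ω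 - σ11*μ2^2*p*q*c + 2*σ11*μ2^2*p*q*c*Real.cos ω^2 - 2*σ11*μ1*μ2*q^2*Real.cos ω^2 + 2*σ11*σ22*μ1*μ2 + σ11*σ12*μ2^2) * hc
        + (μ2^2*p^2*q^2*Real.cos ω^2 - 2*μ2^2*p^2*q^2*c*s*Real.cos ω*Real.sin ω + μ2^2*p^2*q^2*c^2 - 2*μ2^2*p^2*q^2*c^2*Real.cos ω^2 + 2*μ1*μ2*p*q^3*c*Real.cos ω^2 - σ22*μ2^2*p^2 + σ22*μ2^2*p^2*s^2*Real.sin ω^2 + 2*σ22*μ2^2*p^2*c*s*Real.cos ω*Real.sin ω + σ22*μ2^2*p^2*c^2*Real.cos ω^2 - 2*σ22*μ1*μ2*p*q*c + σ22*μ1^2*q^2*Real.cos ω^2 - σ22^2*μ1^2 + σ11*μ2^2*q^2*Real.cos ω^2 - σ11*σ22*μ2^2) * hp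
        + (- μ2^2*p^4 + μ2^2*p^4*s^2*Real.sin ω^2 + 2*μ2^2*p^4*c*s*Real.cos ω*Real.sin ω + μ2^2*p^4*c^2*Real.cos ω^2 - 2*μ1*μ2*p^3*q*c + 2*μ1*μ2*p^3*q*c*s^2*Real.sin ω^2 + 4*μ1*μ2*p^3*q*c^2*s*Real.cos ω*Real.sin ω + 2*μ1*μ2*p^3*q*c^3*Real.cos ω^2 - μ1^2*p^2*q^2 + μ1^2*p^2*q^2*Real.cos ω^2 + μ1^2*p^2*q^2*s^2*Real.sin ω^2 + μ1^2*p^2*q^2*c^2 - μ1^2*p^2*q^2*c^2*Real.cos ω^2 - σ22*μ1^2*p^2 + σ22*μ1^2*p^2*s^2*Real.sin ω^2 + 2*σ22*μ1^2*p^2*c*s*Real.cos ω*Real.sin ω + σ22*μ1^2*p^2*c^2*Real.cos ω^2) * hq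
        + (μ2^2*p^4*q^2*Real.sin ω^2 + 2*μ1*μ2*p^3*q^3*c*Real.sin ω^2 + μ1^2*p^2*q^4*Real.sin ω^2) * hpyb
        + (μ2^2*p^4*q^2 - μ2^2*p^4*q^2*c^2 + 2*μ1*μ2*p^3*q^3*c - 2*μ1*μ2*p^3*q^3*c^3 + μ1^2*p^2*q^4 - μ1^2*p^2*q^4*c^2) * hpyo
    rcases mul_eq_zero.mp key with h | h
    · exact h
    · exact absurd h h2
  have hsa : 0 < Real.sin α := Real.sin_pos_of_pos_of_lt_pi hα1 (by linarith)
  have hsiw : 0 < Real.sin ω := Real.sin_pos_of_pos_of_lt_pi hω1 (by linarith)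
  have hg2pos : 0 < σ12 * X + σ22 * Y + μ2 := by
    nlinarith only [hg2, hd0, mul_pos (mul_pos (mul_pos (mul_pos hm0 hs0) hσ22) hp0) hsiw]
  intro x y hxy
  rw [hγ] at hxy
  have hE : (σ11 * X + σ12 * Y + μ1) * (x - X) + (σ12 * X + σ22 * Y + μ2) * (y - Y)
      + (1/2) * (σ11 * (x - X) ^ 2 + 2 * σ12 * (x - X) * (y - Y) + σ22 * (y - Y) ^ 2) = 0 := by
    linear_combination hxy - hA'
  have hQ : 0 ≤ σ11 * (x - X) ^ 2 + 2 * σ12 * (x - X) * (y - Y) + σ22 * (y - Y) ^ 2 := by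
    nlinarith only [sq_nonneg (σ11 * (x - X) + σ12 * (y - Y)),
      mul_nonneg hdet.le (sq_nonneg (y - Y)), hσ11]
  have hfact : (σ12 * X + σ22 * Y + μ2) * (Real.cos α * (x - X) + Real.sin α * (y - Y))
      = -(Real.sin α * (σ11 * (x - X) ^ 2 + 2 * σ12 * (x - X) * (y - Y)
          + σ22 * (y - Y) ^ 2)) / 2 := by
    linear_combination Real.sin α * hE - (x - X) * hpar
  have hmain : Real.cos α * (x - X) + Real.sin α * (y - Y) ≤ 0 := by
    nlinarith only [hfact, hg2pos, mul_nonneg hsa.le hQ]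
  refine ⟨by linarith only [hmain], ?_, ?_⟩
  · intro heq
    have hexpr0 : Real.cos α * (x - X) + Real.sin α * (y - Y) = 0 := by linear_combination heq
    have hQ0 : σ11 * (x - X) ^ 2 + 2 * σ12 * (x - X) * (y - Y) + σ22 * (y - Y) ^ 2 = 0 := by
      rw [hexpr0, mul_zero] at hfact
      have h1 : Real.sin α * (σ11 * (x - X) ^ 2 + 2 * σ12 * (x - X) * (y - Y)
          + σ22 * (y - Y) ^ 2) = 0 := by linarith only [hfact]
      exact (mul_eq_zero.mp h1).resolve_left (ne_of_gt hsa)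
    have hdy : (y - Y) ^ 2 ≤ 0 := by
      nlinarith only [hQ0, sq_nonneg (σ11 * (x - X) + σ12 * (y - Y)), hdet, hσ11]
    have hy' : y = Y := by
      have h0 : (y - Y) ^ 2 = 0 := le_antisymm hdy (sq_nonneg _)
      have h1 : y - Y = 0 := pow_eq_zero_iff two_ne_zero |>.mp h0
      linarith only [h1]
    have hx' : x = X := by
      rw [hy'] at hQ0
      have hdx : (x - X) ^ 2 ≤ 0 := by nlinarith only [hQ0, hσ11]
      have h0 : (x - X) ^ 2 = 0 := le_antisymm hdx (sq_nonneg _)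
      have h1 : x - X = 0 := pow_eq_zero_iff two_ne_zero |>.mp h0
      linarith only [h1]
    exact ⟨hx', hy'⟩
  · rintro ⟨hx', hy'⟩
    rw [hx', hy']
end

section
/- Let θ := arccos(−(x_max+x_min)/(x_max−x_min)) ∈ (0,π) and let δ ∈ (0,π) be the unique angle with sin(β)·cos(δ) = (ρ·√(σ₂₂/σ₁₁) + cos β)·sin(δ) (i.e. cot δ = (ρ√(σ₂₂/σ₁₁) + cos β)/sin β; equivalently tan δ = sin β/(ρ√(σ₂₂/σ₁₁) + cos β) when the denominator is nonzero). Then the nonzero intersection of the ellipse with the line r₁₂x + r₂₂y = 0 occurs at parameter 2δ − θ: x̃(2δ − θ) = x* and ỹ(2δ − θ) = −ρ·x*. -/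
/-!
The curve `t ↦ (x̃ t, ỹ t)` is an affine image of the unit circle, so by the sum-to-product
formula the chord from parameter `θ` to parameter `2δ - θ` is a multiple of
`(a₁ sin δ, a₂ sin (δ - β))`, where `a₁, a₂` are the half-widths: its direction depends on `δ` only.
Both coordinates vanish at `t = θ` (the ellipse passes through the origin), and the relation
defining `δ` says exactly that `a₂ sin (δ - β) = -ρ a₁ sin δ`, so the point at `2δ - θ` lies on
the line `y = -ρ x`. Its abscissa is computed directly from `cot δ`.
-/

open Real

theorem mul_cos_sin_arccos_neg_div {b c r : ℝ} (hr : 0 < r) (hc : 0 ≤ c)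
    (h : b ^ 2 + c ^ 2 = r ^ 2) :
    r * cos (arccos (-b / r)) = -b ∧ r * sin (arccos (-b / r)) = c := by
  have hb : |b| ≤ r := abs_le_of_sq_le_sq (by nlinarith) hr.le
  obtain ⟨hb₁, hb₂⟩ := abs_le.mp hb
  refine ⟨?_, ?_⟩
  · rw [cos_arccos (by rw [le_div_iff₀ hr]; linarith) (by rw [div_le_one hr]; linarith)]
    field_simp
  · rw [sin_arccos, show 1 - (-b / r) ^ 2 = (c / r) ^ 2 by field_simp; linarith,
      sqrt_sq (div_nonneg hc hr.le)]
    field_simp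

theorem cos_two_mul_sub_sub (δ θ β : ℝ) :
    cos (2 * δ - θ - β) = cos (θ - β) - 2 * sin (δ - β) * sin (δ - θ) := by
  have h := cos_sub_cos (2 * δ - θ - β) (θ - β)
  rw [show (2 * δ - θ - β + (θ - β)) / 2 = δ - β by ring,
    show (2 * δ - θ - β - (θ - β)) / 2 = δ - θ by ring] at h
  linarith

theorem add_mul_cos_two_mul_sub_sub_eq_neg_mul {c₁ c₂ a₁ a₂ ρ θ δ β : ℝ}
    (h₁ : c₁ + a₁ * cos θ = 0) (h₂ : c₂ + a₂ * cos (θ - β) = 0)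
    (hslope : a₂ * sin (δ - β) = -ρ * (a₁ * sin δ)) :
    c₂ + a₂ * cos (2 * δ - θ - β) = -ρ * (c₁ + a₁ * cos (2 * δ - θ)) := by
  have hx := cos_two_mul_sub_sub δ θ 0
  simp only [sub_zero] at hx
  rw [cos_two_mul_sub_sub, hx]
  linear_combination h₂ + ρ * h₁ - 2 * sin (δ - θ) * hslope

theorem add_mul_cos_two_mul_sub_of_mul_cos_eq {b e θ : ℝ} (h : e * cos θ = -b) (δ : ℝ) :
    b + e * cos (2 * δ - θ) = 2 * sin δ * (b * sin δ + e * sin θ * cos δ) := by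
  rw [cos_sub, cos_two_mul, sin_two_mul]
  linear_combination (2 * cos δ ^ 2 - 1) * h - 2 * b * sin_sq_add_cos_sq δ

theorem sin_sq_mul_sq_add_sq_of_mul_cos_eq {s k δ : ℝ} (h : s * cos δ = k * sin δ) :
    sin δ ^ 2 * (s ^ 2 + k ^ 2) = s ^ 2 := by
  linear_combination (-(s * cos δ + k * sin δ)) * h + s ^ 2 * sin_sq_add_cos_sq δ

theorem mid_add_half_width_mul_mul (b e c : ℝ) {d : ℝ} (hd : d ≠ 0) :
    (((b + e) / d + (b - e) / d) / 2 + ((b + e) / d - (b - e) / d) / 2 * c) * d =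
      b + e * c := by
  rw [← add_div, ← sub_div]
  field_simp
  ring

theorem neg_mid_div_half_width (b e : ℝ) {d : ℝ} (hd : d ≠ 0) :
    -((b + e) / d + (b - e) / d) / ((b + e) / d - (b - e) / d) = -b / e := by
  rw [← add_div, ← sub_div, ← neg_div, div_div_div_cancel_right₀ hd, add_add_sub_cancel,
    add_sub_sub_cancel, ← two_mul, ← two_mul, ← mul_neg, mul_div_mul_left _ _ two_ne_zero]

theorem sqrt_mul_cos_sin_arccos_neg_div_sqrt {σ11 σ12 σ22 : ℝ} (hσ : 0 < σ11 * σ22)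
    (hdet : 0 ≤ σ11 * σ22 - σ12 ^ 2) :
    √(σ11 * σ22) * cos (arccos (-σ12 / √(σ11 * σ22))) = -σ12 ∧
      √(σ11 * σ22) * sin (arccos (-σ12 / √(σ11 * σ22))) = √(σ11 * σ22 - σ12 ^ 2) := by
  refine mul_cos_sin_arccos_neg_div (sqrt_pos.2 hσ) (sqrt_nonneg _) ?_
  rw [sq_sqrt hdet, sq_sqrt hσ.le]
  ring

theorem sqrt_mul_cos_sin_arccos_neg_div_sqrt_of_eq {b μ d D : ℝ} (hμ : 0 < μ) (hd : 0 < d)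
    (hD : D = b ^ 2 + μ ^ 2 * d) :
    √D * cos (arccos (-b / √D)) = -b ∧ √D * sin (arccos (-b / √D)) = μ * √d := by
  refine mul_cos_sin_arccos_neg_div (sqrt_pos.2 (by rw [hD]; positivity)) (by positivity) ?_
  rw [mul_pow, sq_sqrt hd.le, sq_sqrt (by rw [hD]; positivity), hD]

/- `D₁ = σ₂₂ q` and `D₂ = σ₁₁ q` with `q = μ₁² σ₂₂ - 2 μ₁ μ₂ σ₁₂ + μ₂² σ₁₁`. -/
theorem sqrt_discr_mul_eq (σ11 σ12 σ22 μ1 μ2 : ℝ) (hσ11 : 0 ≤ σ11) (hσ22 : 0 ≤ σ22) :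
    √((μ1 * σ12 - μ2 * σ11) ^ 2 + μ1 ^ 2 * (σ11 * σ22 - σ12 ^ 2)) * σ22 =
      √((μ2 * σ12 - μ1 * σ22) ^ 2 + μ2 ^ 2 * (σ11 * σ22 - σ12 ^ 2)) * √(σ11 * σ22) := by
  rw [← sqrt_mul' _ (mul_nonneg hσ11 hσ22), ← sqrt_sq hσ22, ← sqrt_mul' _ (sq_nonneg _),
    sqrt_sq hσ22]
  congr 1
  ring

theorem mul_cos_eq_of_sin_mul_cos_eq {σ11 σ12 σ22 ρ sd β δ : ℝ} (hσ11 : 0 < σ11)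
    (hσ22 : 0 ≤ σ22) (hcβ : √(σ11 * σ22) * cos β = -σ12) (hsβ : √(σ11 * σ22) * sin β = sd)
    (h : sin β * cos δ = (ρ * √(σ22 / σ11) + cos β) * sin δ) :
    sd * cos δ = (ρ * σ22 - σ12) * sin δ := by
  have hw : √(σ22 / σ11) * √(σ11 * σ22) = σ22 := by
    rw [← sqrt_mul (div_nonneg hσ22 hσ11.le),
      show σ22 / σ11 * (σ11 * σ22) = σ22 ^ 2 by field_simp, sqrt_sq hσ22]
  rw [← hsβ]
  linear_combination √(σ11 * σ22) * h + ρ * sin δ * hw + sin δ * hcβ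

theorem add_mul_cos_two_mul_sub_eq_mul_div {σ11 σ12 σ22 μ1 μ2 ρ e sd θ δ : ℝ}
    (hσ22 : 0 < σ22) (hdet : 0 < σ11 * σ22 - σ12 ^ 2) (hsd : sd ^ 2 = σ11 * σ22 - σ12 ^ 2)
    (hcθ : e * cos θ = -(μ2 * σ12 - μ1 * σ22)) (hsθ : e * sin θ = μ2 * sd)
    (hδ : sd * cos δ = (ρ * σ22 - σ12) * sin δ) :
    (μ2 * σ12 - μ1 * σ22) + e * cos (2 * δ - θ) =
      (σ11 * σ22 - σ12 ^ 2) * (2 * (μ2 * ρ - μ1) / (σ11 - 2 * σ12 * ρ + σ22 * ρ ^ 2)) := by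
  have hQ : 0 < σ11 - 2 * σ12 * ρ + σ22 * ρ ^ 2 := by nlinarith [sq_nonneg (σ22 * ρ - σ12)]
  have hsin := sin_sq_mul_sq_add_sq_of_mul_cos_eq hδ
  rw [hsd] at hsin
  rw [add_mul_cos_two_mul_sub_of_mul_cos_eq hcθ, hsθ, mul_div_assoc', eq_div_iff hQ.ne']
  linear_combination (σ11 - 2 * σ12 * ρ + σ22 * ρ ^ 2) * 2 * μ2 * sin δ * hδ +
    2 * (μ2 * ρ - μ1) * hsin

theorem add_mul_cos_sub_eq_zero {σ11 σ12 σ22 μ1 μ2 e f sm sd θ β : ℝ}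
    (he : e ≠ 0) (hsm : sm ≠ 0) (hsd : sd ^ 2 = σ11 * σ22 - σ12 ^ 2) (hfe : f * σ22 = e * sm)
    (hcβ : sm * cos β = -σ12) (hsβ : sm * sin β = sd)
    (hcθ : e * cos θ = -(μ2 * σ12 - μ1 * σ22)) (hsθ : e * sin θ = μ2 * sd) :
    (μ1 * σ12 - μ2 * σ11) + f * cos (θ - β) = 0 := by
  refine mul_left_cancel₀ (mul_ne_zero he hsm) ?_
  rw [cos_sub]
  linear_combination f * sm * cos β * hcθ - f * (μ2 * σ12 - μ1 * σ22) * hcβ +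
    f * sm * sin β * hsθ + f * μ2 * sd * hsβ + f * μ2 * hsd - (μ1 * σ12 - μ2 * σ11) * hfe

theorem mul_sin_sub_eq_neg_mul {σ12 σ22 ρ e f sm sd β δ : ℝ} (hσ22 : σ22 ≠ 0)
    (hfe : f * σ22 = e * sm) (hcβ : sm * cos β = -σ12) (hsβ : sm * sin β = sd)
    (hδ : sd * cos δ = (ρ * σ22 - σ12) * sin δ) :
    f * sin (δ - β) = -ρ * (e * sin δ) := by
  refine mul_left_cancel₀ hσ22 ?_
  rw [sin_sub]
  linear_combination (sin δ * cos β - cos δ * sin β) * hfe + e * sin δ * hcβ -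
    e * cos δ * hsβ - e * hδ

theorem stmt12_general
    (σ11 σ12 σ22 μ1 μ2 : ℝ)
    (hσ11 : 0 < σ11) (hσ22 : 0 < σ22)
    (hdet : 0 < σ11 * σ22 - σ12 ^ 2)
    (hμ2 : 0 < μ2)
    (detS D1 D2 xmin xmax ymin ymax β : ℝ)
    (hdetS : detS = σ11 * σ22 - σ12 ^ 2)
    (hD1 : D1 = (μ2 * σ12 - μ1 * σ22) ^ 2 + μ2 ^ 2 * detS)
    (hxmin : xmin = (μ2 * σ12 - μ1 * σ22 - Real.sqrt D1) / detS)
    (hxmax : xmax = (μ2 * σ12 - μ1 * σ22 + Real.sqrt D1) / detS)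
    (hD2 : D2 = (μ1 * σ12 - μ2 * σ11) ^ 2 + μ1 ^ 2 * detS)
    (hymin : ymin = (μ1 * σ12 - μ2 * σ11 - Real.sqrt D2) / detS)
    (hymax : ymax = (μ1 * σ12 - μ2 * σ11 + Real.sqrt D2) / detS)
    (hβ : β = Real.arccos (-σ12 / Real.sqrt (σ11 * σ22)))
    (xt yt : ℝ → ℝ)
    (hxt : ∀ t, xt t = (xmax + xmin) / 2 + ((xmax - xmin) / 2) * Real.cos t)
    (hyt : ∀ t, yt t = (ymax + ymin) / 2 + ((ymax - ymin) / 2) * Real.cos (t - β))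
    (ρ : ℝ)
    (xstar : ℝ)
    (hxstar : xstar = 2 * (μ2 * ρ - μ1) / (σ11 - 2 * σ12 * ρ + σ22 * ρ ^ 2))
    (θ : ℝ) (hθ : θ = Real.arccos (-(xmax + xmin) / (xmax - xmin)))
    (δ : ℝ)
    (hδeq : Real.sin β * Real.cos δ =
      (ρ * Real.sqrt (σ22 / σ11) + Real.cos β) * Real.sin δ) :
    xt (2 * δ - θ) = xstar ∧ yt (2 * δ - θ) = -ρ * xstar := by
  subst hdetS
  have hsm : 0 < √(σ11 * σ22) := sqrt_pos.2 (mul_pos hσ11 hσ22)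
  have he : 0 < √D1 := sqrt_pos.2 <|
    hD1 ▸ add_pos_of_nonneg_of_pos (sq_nonneg _) (mul_pos (pow_pos hμ2 2) hdet)
  have hx (t : ℝ) : xt t * (σ11 * σ22 - σ12 ^ 2) = (μ2 * σ12 - μ1 * σ22) + √D1 * cos t := by
    rw [hxt, hxmax, hxmin, mid_add_half_width_mul_mul _ _ _ hdet.ne']
  have hy (t : ℝ) :
      yt t * (σ11 * σ22 - σ12 ^ 2) = (μ1 * σ12 - μ2 * σ11) + √D2 * cos (t - β) := by
    rw [hyt, hymax, hymin, mid_add_half_width_mul_mul _ _ _ hdet.ne']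
  obtain ⟨hcβ, hsβ⟩ := hβ ▸ sqrt_mul_cos_sin_arccos_neg_div_sqrt (mul_pos hσ11 hσ22) hdet.le
  rw [hxmax, hxmin, neg_mid_div_half_width _ _ hdet.ne'] at hθ
  obtain ⟨hcθ, hsθ⟩ := hθ ▸ sqrt_mul_cos_sin_arccos_neg_div_sqrt_of_eq hμ2 hdet hD1
  have hδ := mul_cos_eq_of_sin_mul_cos_eq hσ11 hσ22.le hcβ hsβ hδeq
  have hfe := sqrt_discr_mul_eq σ11 σ12 σ22 μ1 μ2 hσ11.le hσ22.le
  rw [← hD1, ← hD2] at hfe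
  have hxval : xt (2 * δ - θ) = xstar := by
    rw [hxstar, ← mul_left_inj' hdet.ne', hx]
    exact (add_mul_cos_two_mul_sub_eq_mul_div hσ22 hdet (sq_sqrt hdet.le) hcθ hsθ hδ).trans
      (mul_comm _ _)
  refine ⟨hxval, mul_right_cancel₀ hdet.ne' ?_⟩
  rw [hy, ← hxval, mul_assoc, hx]
  exact add_mul_cos_two_mul_sub_sub_eq_neg_mul (by rw [hcθ]; ring)
    (add_mul_cos_sub_eq_zero he.ne' hsm.ne' (sq_sqrt hdet.le) hfe hcβ hsβ hcθ hsθ)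
    (mul_sin_sub_eq_neg_mul hσ22.ne' hfe hcβ hsβ hδ)

theorem stmt12
    (σ11 σ12 σ22 μ1 μ2 : ℝ)
    (hσ11 : 0 < σ11) (hσ22 : 0 < σ22)
    (hdet : 0 < σ11 * σ22 - σ12 ^ 2)
    (hμ1 : 0 < μ1) (hμ2 : 0 < μ2)
    (detS D1 D2 xmin xmax ymin ymax β : ℝ)
    (hdetS : detS = σ11 * σ22 - σ12 ^ 2)
    (hD1 : D1 = (μ2 * σ12 - μ1 * σ22) ^ 2 + μ2 ^ 2 * detS)
    (hxmin : xmin = (μ2 * σ12 - μ1 * σ22 - Real.sqrt D1) / detS)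
    (hxmax : xmax = (μ2 * σ12 - μ1 * σ22 + Real.sqrt D1) / detS)
    (hD2 : D2 = (μ1 * σ12 - μ2 * σ11) ^ 2 + μ1 ^ 2 * detS)
    (hymin : ymin = (μ1 * σ12 - μ2 * σ11 - Real.sqrt D2) / detS)
    (hymax : ymax = (μ1 * σ12 - μ2 * σ11 + Real.sqrt D2) / detS)
    (hβ : β = Real.arccos (-σ12 / Real.sqrt (σ11 * σ22)))
    (xt yt : ℝ → ℝ)
    (hxt : ∀ t, xt t = (xmax + xmin) / 2 + ((xmax - xmin) / 2) * Real.cos t)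
    (hyt : ∀ t, yt t = (ymax + ymin) / 2 + ((ymax - ymin) / 2) * Real.cos (t - β))
    (r12 r22 : ℝ) (hr22 : 0 < r22)
    (ρ : ℝ) (hρ : ρ = r12 / r22)
    (xstar : ℝ)
    (hxstar : xstar = 2 * (μ2 * ρ - μ1) / (σ11 - 2 * σ12 * ρ + σ22 * ρ ^ 2))
    (θ : ℝ) (hθ : θ = Real.arccos (-(xmax + xmin) / (xmax - xmin)))
    (δ : ℝ) (hδ : δ ∈ Set.Ioo 0 Real.pi)
    (hδeq : Real.sin β * Real.cos δ =
      (ρ * Real.sqrt (σ22 / σ11) + Real.cos β) * Real.sin δ) :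
    xt (2 * δ - θ) = xstar ∧ yt (2 * δ - θ) = -ρ * xstar :=
  stmt12_general σ11 σ12 σ22 μ1 μ2 hσ11 hσ22 hdet hμ2 detS D1 D2 xmin xmax ymin ymax β hdetS hD1
    hxmin hxmax hD2 hymin hymax hβ xt yt hxt hyt ρ xstar hxstar θ hθ δ hδeq
end

section
/- For every ω ∈ ℝ one has the identity √σ₁₁·sin(β − ω)·x̂(ω) + √σ₂₂·sin(ω)·ŷ(ω) = 2m·sin²((ω − θ)/2). (This is the exponential decay-rate identity of Proposition 10.3: in the wedge of angle β, the decay rate in direction ω of the saddle-point contribution equals 2|μ̃|·sin²((ω−θ)/2).) -/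
open Real

/-! After the common factor `(2m / sin β) · sin((θ - ω)/2)` is pulled out of `x̂` and `ŷ`, the
remaining combination collapses to `sin β · sin((θ - ω)/2)` by the three-angle identity
`sin(b - w) sin u + sin w sin(u - b) = sin b sin(u - w)`. -/

theorem sin_sub_mul_sin_add_sin_mul_sin_sub (b w u : ℝ) :
    sin (b - w) * sin u + sin w * sin (u - b) = sin b * sin (u - w) := by
  simp only [sin_sub]
  ring

theorem stmt13_general
    (β θ m σ11 σ22 : ℝ)
    (hβ0 : 0 < β) (hβπ : β < Real.pi)
    (hσ11 : 0 < σ11) (hσ22 : 0 < σ22)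
    (xh yh : ℝ → ℝ)
    (hxh : ∀ ω, xh ω = (2 * m / (Real.sqrt σ11 * Real.sin β)) *
      Real.sin ((θ - ω) / 2) * Real.sin ((ω + θ) / 2))
    (hyh : ∀ ω, yh ω = (2 * m / (Real.sqrt σ22 * Real.sin β)) *
      Real.sin ((θ - ω) / 2) * Real.sin ((ω + θ - 2 * β) / 2)) :
    ∀ ω : ℝ,
      Real.sqrt σ11 * Real.sin (β - ω) * xh ω + Real.sqrt σ22 * Real.sin ω * yh ω =
        2 * m * Real.sin ((ω - θ) / 2) ^ 2 := by
  intro ω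
  have hsinβ : sin β ≠ 0 := (sin_pos_of_pos_of_lt_pi hβ0 hβπ).ne'
  have hσ11' : √σ11 ≠ 0 := (sqrt_pos.mpr hσ11).ne'
  have hσ22' : √σ22 ≠ 0 := (sqrt_pos.mpr hσ22).ne'
  have hsum := sin_sub_mul_sin_add_sin_mul_sin_sub β ω ((ω + θ) / 2)
  rw [show (ω + θ) / 2 - β = (ω + θ - 2 * β) / 2 by ring,
    show (ω + θ) / 2 - ω = (θ - ω) / 2 by ring] at hsum
  have hsq : sin ((ω - θ) / 2) ^ 2 = sin ((θ - ω) / 2) ^ 2 := by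
    rw [← neg_sub, neg_div, sin_neg, neg_sq]
  rw [hxh, hyh, hsq]
  linear_combination (norm := (field_simp; ring)) 2 * m * sin ((θ - ω) / 2) / sin β * hsum

theorem stmt13
    (β θ m σ11 σ22 : ℝ)
    (hβ0 : 0 < β) (hβπ : β < Real.pi)
    (hm : 0 < m) (hσ11 : 0 < σ11) (hσ22 : 0 < σ22)
    (xh yh : ℝ → ℝ)
    (hxh : ∀ ω, xh ω = (2 * m / (Real.sqrt σ11 * Real.sin β)) *
      Real.sin ((θ - ω) / 2) * Real.sin ((ω + θ) / 2))
    (hyh : ∀ ω, yh ω = (2 * m / (Real.sqrt σ22 * Real.sin β)) *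
      Real.sin ((θ - ω) / 2) * Real.sin ((ω + θ - 2 * β) / 2)) :
    ∀ ω : ℝ,
      Real.sqrt σ11 * Real.sin (β - ω) * xh ω + Real.sqrt σ22 * Real.sin ω * yh ω =
        2 * m * Real.sin ((ω - θ) / 2) ^ 2 :=
  stmt13_general β θ m σ11 σ22 hβ0 hβπ hσ11 hσ22 xh yh hxh hyh
end

section
/- The linear map T maps the closed first quadrant bijectively onto the closed convex cone of opening angle β: {T·z : z ∈ [0,∞)²} = {r·(cos t, sin t) : r ≥ 0, t ∈ [0, β]}. -/
open Real

lemma stmt15_aux (β a b : ℝ) (hβ0 : 0 < β) (hβπ : β < π) (ha : 0 ≤ a) (hb : 0 ≤ b) :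
    ∃ r t : ℝ, 0 ≤ r ∧ 0 ≤ t ∧ t ≤ β ∧ a + b * Real.cos β = r * Real.cos t ∧
      b * Real.sin β = r * Real.sin t := by
  have hsin : 0 < Real.sin β := Real.sin_pos_of_pos_of_lt_pi hβ0 hβπ
  have hc1 : -1 < Real.cos β := by
    have h := Real.cos_lt_cos_of_nonneg_of_le_pi (le_of_lt hβ0) le_rfl hβπ
    rwa [Real.cos_pi] at h
  have hc2 : Real.cos β < 1 := by
    have h := Real.cos_lt_cos_of_nonneg_of_le_pi le_rfl (le_of_lt hβπ) hβ0
    rwa [Real.cos_zero] at h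
  rcases eq_or_lt_of_le (add_nonneg ha hb) with hab | hab
  · have ha0 : a = 0 := by linarith
    have hb0 : b = 0 := by linarith
    exact ⟨0, 0, le_rfl, le_rfl, le_of_lt hβ0, by simp [ha0, hb0], by simp [hb0]⟩
  set c := Real.cos β with hc
  set s := Real.sin β with hs
  have hsc : s ^ 2 + c ^ 2 = 1 := Real.sin_sq_add_cos_sq β
  have hr2pos : 0 < a ^ 2 + b ^ 2 + 2 * a * b * c := by
    nlinarith [mul_pos (by linarith : (0:ℝ) < 1 + c) (pow_pos hab 2),
      mul_nonneg (by linarith : (0:ℝ) ≤ 1 - c) (sq_nonneg (a - b))]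
  obtain ⟨r, hrdef⟩ : ∃ r : ℝ, r = Real.sqrt (a ^ 2 + b ^ 2 + 2 * a * b * c) := ⟨_, rfl⟩
  have hr2 : r ^ 2 = a ^ 2 + b ^ 2 + 2 * a * b * c := by rw [hrdef]; exact Real.sq_sqrt (le_of_lt hr2pos)
  have hrpos : 0 < r := by rw [hrdef]; exact Real.sqrt_pos.mpr hr2pos
  have hkey : (a + b * c) ^ 2 + (b * s) ^ 2 = r ^ 2 := by rw [hr2]; nlinarith
  have habs : (a + b * c) ^ 2 ≤ r ^ 2 := by nlinarith [sq_nonneg (b * s)]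
  have habs' : |a + b * c| ≤ r := by
    rw [← Real.sqrt_sq_eq_abs, ← Real.sqrt_sq hrpos.le]
    exact Real.sqrt_le_sqrt habs
  have hx1 : -1 ≤ (a + b * c) / r := by
    rw [le_div_iff₀ hrpos]
    have := neg_abs_le (a + b * c)
    linarith
  have hx2 : (a + b * c) / r ≤ 1 := by
    rw [div_le_one hrpos]
    have := le_abs_self (a + b * c)
    linarith
  obtain ⟨t, htdef⟩ : ∃ t : ℝ, t = Real.arccos ((a + b * c) / r) := ⟨_, rfl⟩
  have hcost : Real.cos t = (a + b * c) / r := by rw [htdef]; exact Real.cos_arccos hx1 hx2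
  have hsint : Real.sin t = b * s / r := by
    rw [htdef, Real.sin_arccos]
    have h1 : 1 - ((a + b * c) / r) ^ 2 = (b * s / r) ^ 2 := by
      field_simp
      nlinarith
    rw [h1, Real.sqrt_sq (by positivity)]
  have htβ : t ≤ β := by
    by_contra h
    push_neg at h
    have htπ : t ≤ π := by rw [htdef]; exact Real.arccos_le_pi _
    have hpos : 0 < Real.sin (t - β) :=
      Real.sin_pos_of_pos_of_lt_pi (by linarith) (by linarith)
    rw [Real.sin_sub, hcost, hsint, ← hc, ← hs] at hpos
    have : Real.sin t * c - Real.cos t * s ≤ 0 := by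
      rw [hcost, hsint]
      have : b * s / r * c - (a + b * c) / r * s = -(a * s) / r := by field_simp; ring
      rw [this]
      apply div_nonpos_of_nonpos_of_nonneg _ hrpos.le
      nlinarith
    rw [hcost, hsint] at this
    linarith
  refine ⟨r, t, hrpos.le, by rw [htdef]; exact Real.arccos_nonneg _, htβ, ?_, ?_⟩
  · rw [hcost]; field_simp
  · rw [hsint]; field_simp


open Real Matrix

theorem stmt15
    (σ11 σ12 σ22 : ℝ)
    (hσ11 : 0 < σ11) (hσ22 : 0 < σ22)
    (hdet : 0 < σ11 * σ22 - σ12 ^ 2)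
    (β : ℝ) (hβ : β = Real.arccos (-σ12 / Real.sqrt (σ11 * σ22)))
    (T : Matrix (Fin 2) (Fin 2) ℝ)
    (hT : T = !![1 / Real.sin β, Real.cos β / Real.sin β; 0, 1] *
      !![1 / Real.sqrt σ11, 0; 0, 1 / Real.sqrt σ22]) :
    {v : Fin 2 → ℝ | ∃ z : Fin 2 → ℝ, 0 ≤ z 0 ∧ 0 ≤ z 1 ∧ v = T.mulVec z} =
      {v : Fin 2 → ℝ | ∃ r t : ℝ, 0 ≤ r ∧ t ∈ Set.Icc 0 β ∧
        v = ![r * Real.cos t, r * Real.sin t]} := by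
  have h12 : |σ12| < Real.sqrt (σ11 * σ22) := by
    rw [← Real.sqrt_sq_eq_abs]
    exact Real.sqrt_lt_sqrt (sq_nonneg _) (by nlinarith)
  have hs : 0 < Real.sqrt (σ11 * σ22) := lt_of_le_of_lt (abs_nonneg _) h12
  obtain ⟨h12a, h12b⟩ := abs_lt.mp h12
  have hβ0 : 0 < β := by
    rw [hβ, Real.arccos_pos, div_lt_one hs]
    linarith
  have hxlt : -1 < -σ12 / Real.sqrt (σ11 * σ22) := by rw [lt_div_iff₀ hs]; linarith
  have hxgt : -σ12 / Real.sqrt (σ11 * σ22) < 1 := by rw [div_lt_one hs]; linarith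
  have hcosβ : Real.cos β = -σ12 / Real.sqrt (σ11 * σ22) := by
    rw [hβ]; exact Real.cos_arccos hxlt.le hxgt.le
  have hβπ : β < π := lt_of_le_of_ne (by rw [hβ]; exact Real.arccos_le_pi _)
    (fun h => by rw [h, Real.cos_pi] at hcosβ; nlinarith)
  have hsin : 0 < Real.sin β := Real.sin_pos_of_pos_of_lt_pi hβ0 hβπ
  have h11 : 0 < Real.sqrt σ11 := Real.sqrt_pos.mpr hσ11
  have h22 : 0 < Real.sqrt σ22 := Real.sqrt_pos.mpr hσ22
  have hTmv : ∀ z : Fin 2 → ℝ, T.mulVec z =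
      ![z 0 / (Real.sqrt σ11 * Real.sin β) + z 1 * Real.cos β / (Real.sqrt σ22 * Real.sin β),
        z 1 / Real.sqrt σ22] := by
    intro z
    funext i
    fin_cases i <;>
      simp [hT, Matrix.mulVec, dotProduct, Fin.sum_univ_two, Matrix.mul_apply] <;>
      field_simp <;> ring
  ext v
  simp only [Set.mem_setOf_eq, Set.mem_Icc]
  constructor
  · rintro ⟨z, hz0, hz1, rfl⟩
    obtain ⟨r, t, hr, ht0, htβ, hcos, hsin'⟩ :=
      stmt15_aux β (z 0 / (Real.sqrt σ11 * Real.sin β)) (z 1 / (Real.sqrt σ22 * Real.sin β))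
        hβ0 hβπ (div_nonneg hz0 (by positivity)) (div_nonneg hz1 (by positivity))
    refine ⟨r, t, hr, ⟨ht0, htβ⟩, ?_⟩
    rw [hTmv]
    funext i
    fin_cases i
    · show z 0 / (Real.sqrt σ11 * Real.sin β) + z 1 * Real.cos β / (Real.sqrt σ22 * Real.sin β)
        = r * Real.cos t
      rw [← hcos]; ring
    · show z 1 / Real.sqrt σ22 = r * Real.sin t
      rw [← hsin']
      field_simp
  · rintro ⟨r, t, hr, ⟨ht0, htβ⟩, rfl⟩
    have hst : 0 ≤ Real.sin t :=
      Real.sin_nonneg_of_nonneg_of_le_pi ht0 (by linarith)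
    have hsbt : 0 ≤ Real.sin (β - t) :=
      Real.sin_nonneg_of_nonneg_of_le_pi (by linarith) (by linarith)
    refine ⟨![Real.sqrt σ11 * (r * Real.sin (β - t)), Real.sqrt σ22 * (r * Real.sin t)],
      ?_, ?_, ?_⟩
    · show 0 ≤ Real.sqrt σ11 * (r * Real.sin (β - t))
      positivity
    · show 0 ≤ Real.sqrt σ22 * (r * Real.sin t)
      positivity
    rw [hTmv]
    funext i
    fin_cases i
    · show r * Real.cos t =
        Real.sqrt σ11 * (r * Real.sin (β - t)) / (Real.sqrt σ11 * Real.sin β) +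
        Real.sqrt σ22 * (r * Real.sin t) * Real.cos β / (Real.sqrt σ22 * Real.sin β)
      rw [Real.sin_sub]
      field_simp
      ring
    · show r * Real.sin t = Real.sqrt σ22 * (r * Real.sin t) / Real.sqrt σ22
      field_simp
end

section
/- Let (Aₙ) and (Bₙ) be sequences of real numbers such that |Aₙ| → ∞ and Bₙ/Aₙ → 0 as n → ∞. Then i·(Aₙ + i·Bₙ)·∫_{−∞}^{∞} e^{−s²}/(s + i·(Aₙ + i·Bₙ)) ds → √π as n → ∞; in other words, ∫_{−∞}^{∞} e^{−s²}/(s + i·(A + iB)) ds ∼ √π/(i·(A + iB)) as |A| → ∞ with B = o(A). -/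
open Real Complex MeasureTheory Filter

lemma exp_cast (s : ℝ) : Complex.exp (-(s : ℂ) ^ 2) = ((Real.exp (-s ^ 2) : ℝ) : ℂ) := by
  rw [Complex.ofReal_exp]; push_cast; ring_nf

lemma rexp_int : Integrable (fun s : ℝ => Real.exp (-s ^ 2)) := by
  have := integrable_exp_neg_mul_sq (b := 1) one_pos
  simpa using this

lemma exp_int : Integrable (fun s : ℝ => Complex.exp (-(s : ℂ) ^ 2)) := by
  simp only [exp_cast]; exact rexp_int.ofReal

lemma abs_exp_int : Integrable (fun s : ℝ => |s| * Real.exp (-s ^ 2)) := by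
  have := (integrable_mul_exp_neg_mul_sq (b := 1) one_pos).abs
  refine this.congr (Filter.Eventually.of_forall fun s => ?_)
  simp [abs_mul, abs_of_pos (Real.exp_pos _)]

lemma hne (a b : ℝ) (ha : a ≠ 0) (s : ℝ) :
    (s : ℂ) + Complex.I * ((a:ℂ) + Complex.I * b) ≠ 0 := by
  intro h
  have := congrArg Complex.im h
  simp at this
  exact ha this

lemma hnorm (a b s : ℝ) : |a| ≤ ‖(s : ℂ) + Complex.I * ((a:ℂ) + Complex.I * b)‖ := by
  have h1 : ((s : ℂ) + Complex.I * ((a:ℂ) + Complex.I * b)).im = a := by simp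
  calc |a| = |((s : ℂ) + Complex.I * ((a:ℂ) + Complex.I * b)).im| := by rw [h1]
    _ ≤ _ := Complex.abs_im_le_norm _

lemma exp_norm (s : ℝ) : ‖Complex.exp (-(s : ℂ) ^ 2)‖ = Real.exp (-s ^ 2) := by
  rw [exp_cast, Complex.norm_real, Real.norm_eq_abs, abs_of_pos (Real.exp_pos _)]

lemma g_int (a b : ℝ) (ha : a ≠ 0) : Integrable (fun s : ℝ =>
    Complex.exp (-(s : ℂ) ^ 2) / ((s : ℂ) + Complex.I * ((a:ℂ) + Complex.I * b))) := by
  have hpos : 0 < |a| := abs_pos.mpr ha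
  refine Integrable.mono' (rexp_int.div_const |a|)
    (Continuous.aestronglyMeasurable ?_) (Filter.Eventually.of_forall fun s => ?_)
  · exact (Complex.continuous_exp.comp (by continuity)).div (by continuity) (hne a b ha)
  · rw [norm_div, exp_norm]
    gcongr
    all_goals first
      | exact (Real.exp_pos _).le
      | exact hpos
      | exact hnorm a b s

lemma h_bound (a b : ℝ) (ha : a ≠ 0) (s : ℝ) :
    ‖(s:ℂ) * Complex.exp (-(s : ℂ) ^ 2) / ((s : ℂ) + Complex.I * ((a:ℂ) + Complex.I * b))‖
      ≤ |s| * Real.exp (-s ^ 2) / |a| := by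
  have hpos : 0 < |a| := abs_pos.mpr ha
  rw [norm_div, norm_mul, exp_norm, Complex.norm_real, Real.norm_eq_abs]
  gcongr
  all_goals first
    | positivity
    | exact hpos
    | exact hnorm a b s

lemma h_int (a b : ℝ) (ha : a ≠ 0) : Integrable (fun s : ℝ =>
    (s:ℂ) * Complex.exp (-(s : ℂ) ^ 2) / ((s : ℂ) + Complex.I * ((a:ℂ) + Complex.I * b))) := by
  refine Integrable.mono' (abs_exp_int.div_const |a|)
    (Continuous.aestronglyMeasurable ?_) (Filter.Eventually.of_forall (h_bound a b ha))
  exact (Complex.continuous_ofReal.mul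
    (Complex.continuous_exp.comp (by continuity))).div (by continuity) (hne a b ha)

lemma key (a b : ℝ) (ha : a ≠ 0) :
    Complex.I * ((a : ℂ) + Complex.I * b) *
      ∫ s : ℝ, Complex.exp (-(s : ℂ) ^ 2) / ((s : ℂ) + Complex.I * ((a:ℂ) + Complex.I * b))
    = ((Real.sqrt Real.pi : ℝ) : ℂ)
      - ∫ s : ℝ, (s : ℂ) * Complex.exp (-(s : ℂ) ^ 2) /
          ((s : ℂ) + Complex.I * ((a:ℂ) + Complex.I * b)) := by
  rw [← integral_const_mul]
  have heq : ∀ s : ℝ, Complex.I * ((a:ℂ) + Complex.I * b) *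
      (Complex.exp (-(s : ℂ) ^ 2) / ((s:ℂ) + Complex.I * ((a:ℂ) + Complex.I * b)))
      = Complex.exp (-(s:ℂ)^2) - (s:ℂ) * Complex.exp (-(s:ℂ)^2) /
          ((s:ℂ) + Complex.I * ((a:ℂ) + Complex.I * b)) := by
    intro s
    have h := hne a b ha s
    field_simp
    ring
  simp_rw [heq]
  rw [integral_sub exp_int (h_int a b ha)]
  congr 1
  simp_rw [exp_cast]
  have hre : (∫ a : ℝ, Real.exp (-a ^ 2)) = Real.sqrt Real.pi := by
    simpa using integral_gaussian 1
  calc (∫ a : ℝ, ((Real.exp (-a ^ 2) : ℝ) : ℂ))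
      = (((∫ a : ℝ, Real.exp (-a ^ 2)) : ℝ) : ℂ) := integral_ofReal
    _ = _ := by rw [hre]

theorem stmt18
    (A B : ℕ → ℝ)
    (hA : Tendsto (fun n => |A n|) atTop atTop)
    (hB : Tendsto (fun n => B n / A n) atTop (nhds 0)) :
    Tendsto
      (fun n => Complex.I * ((A n : ℂ) + Complex.I * (B n : ℂ)) *
        ∫ s : ℝ, Complex.exp (-(s : ℂ) ^ 2) /
          ((s : ℂ) + Complex.I * ((A n : ℂ) + Complex.I * (B n : ℂ))))
      atTop (nhds ((Real.sqrt Real.pi : ℝ) : ℂ)) := by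
  have hA0 : ∀ᶠ n in atTop, A n ≠ 0 := by
    filter_upwards [hA.eventually_gt_atTop 0] with n hn
    intro h; rw [h] at hn; simp at hn
  set E : ℕ → ℂ := fun n => ∫ s : ℝ, (s:ℂ) * Complex.exp (-(s:ℂ)^2) /
      ((s:ℂ) + Complex.I * ((A n : ℂ) + Complex.I * (B n : ℂ))) with hE
  have hEz : Tendsto E atTop (nhds 0) := by
    have hb : Tendsto (fun n => (∫ s : ℝ, |s| * Real.exp (-s^2)) / |A n|) atTop (nhds 0) :=
      tendsto_const_nhds.div_atTop hA
    refine squeeze_zero_norm' ?_ hb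
    filter_upwards [hA0] with n hn
    calc ‖E n‖ ≤ ∫ s : ℝ, ‖(s:ℂ) * Complex.exp (-(s:ℂ)^2) /
          ((s:ℂ) + Complex.I * ((A n : ℂ) + Complex.I * (B n : ℂ)))‖ :=
        norm_integral_le_integral_norm _
      _ ≤ ∫ s : ℝ, |s| * Real.exp (-s^2) / |A n| := by
        refine integral_mono (h_int (A n) (B n) hn).norm (abs_exp_int.div_const _) ?_
        exact h_bound (A n) (B n) hn
      _ = (∫ s : ℝ, |s| * Real.exp (-s^2)) / |A n| := integral_div _ _
  have hlim : Tendsto (fun n => ((Real.sqrt Real.pi : ℝ) : ℂ) - E n) atTop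
      (nhds ((Real.sqrt Real.pi : ℝ) : ℂ)) := by
    simpa using tendsto_const_nhds.sub hEz
  refine hlim.congr' ?_
  filter_upwards [hA0] with n hn
  exact (key (A n) (B n) hn).symm
end
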